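/- arXiv:1312.0365 — 8 statements merged into one kernel-verified Lean document; each statement's English description precedes it below -/
import Mathlib

section
/- The set function P₁* defined on 𝒜 by P₁*[A] = E₁[P₀[A|ℋ]] (the P₁-expectation of the ℋ-conditional probability of A under P₀) is a probability measure on (Ω, 𝒜) whose restriction to ℋ equals P₁, and whose ℋ-conditional probabilities satisfy P₁*[A|ℋ] = P₀[A|ℋ] P₁*-almost surely for every A ∈ 𝒜. -/
/-!
`P₁*` is `P₀` reweighted by the `ℋ`-measurable density `ρ = dP₁/d(P₀|ℋ)`; on `ℋ` it therefore
coincides with `ρ · P₀|ℋ = P₁`. Because `ρ` is `ℋ`-measurable it can be pulled out of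
`P₀`-conditional expectations, so for `S ∈ ℋ`
`∫_S P₀[X|ℋ] dP₁* = ∫_S ρ P₀[X|ℋ] dP₀ = ∫_S ρ X dP₀ = ∫_S X dP₁*`,
i.e. `P₀[X|ℋ]` is also a version of `P₁*[X|ℋ]`. Integrating this over `Ω` gives
`P₁*[A] = E₁[P₀[A|ℋ]]`.
-/

open MeasureTheory
open scoped ENNReal NNReal

namespace MeasureTheory

variable {Ω : Type*} {m m0 : MeasurableSpace Ω}

theorem condExp_withDensity_ae_eq (hm : m ≤ m0) {μ : Measure[m0] Ω} {f : Ω → ℝ≥0}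
    (hf : Measurable[m] f) [SigmaFinite (μ.trim hm)]
    [SigmaFinite ((μ.withDensity fun x ↦ f x).trim hm)] {g : Ω → ℝ} (hgμ : Integrable g μ)
    (hgν : Integrable g (μ.withDensity fun x ↦ f x)) :
    (μ.withDensity fun x ↦ f x)[g | m] =ᵐ[μ.withDensity fun x ↦ f x] μ[g | m] := by
  set ρ : Ω → ℝ := fun x ↦ f x
  have hf0 : Measurable[m0] f := hf.mono hm le_rfl
  have hρ : StronglyMeasurable[m] ρ := hf.coe_nnreal_real.stronglyMeasurable
  have hρ_smul : ∀ h : Ω → ℝ, (fun x ↦ f x • h x) = ρ * h := fun h ↦ by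
    ext x; simp [ρ, NNReal.smul_def]
  have hρg : Integrable (ρ * g) μ := by
    rw [← hρ_smul]; exact (integrable_withDensity_iff_integrable_smul hf0).1 hgν
  have hpull : μ[ρ * g | m] =ᵐ[μ] ρ * μ[g | m] := condExp_mul_of_stronglyMeasurable_left hρ hρg hgμ
  have hint : Integrable (μ[g | m]) (μ.withDensity fun x ↦ f x) := by
    rw [integrable_withDensity_iff_integrable_smul hf0, hρ_smul]
    exact integrable_condExp.congr hpull
  refine (ae_eq_condExp_of_forall_setIntegral_eq hm hgν (fun _ _ _ ↦ hint.integrableOn)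
    (fun S hS _ ↦ ?_) stronglyMeasurable_condExp.aestronglyMeasurable).symm
  rw [setIntegral_withDensity_eq_setIntegral_smul hf0 _ (hm S hS),
    setIntegral_withDensity_eq_setIntegral_smul hf0 _ (hm S hS), hρ_smul, hρ_smul]
  calc ∫ x in S, (ρ * μ[g | m]) x ∂μ = ∫ x in S, (μ[ρ * g | m]) x ∂μ :=
        setIntegral_congr_ae (hm S hS) (hpull.mono fun x hx _ ↦ hx.symm)
    _ = ∫ x in S, (ρ * g) x ∂μ := setIntegral_condExp hm hρg hS

/-- The density is truncated to `ℝ≥0` (harmlessly, as `dν/d(μ.trim hm)` is a.e. finite) so that it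
can be pulled out of real-valued conditional expectations. -/
noncomputable def Measure.extendAlong (hm : m ≤ m0) (μ : Measure[m0] Ω) (ν : Measure[m] Ω) :
    Measure[m0] Ω :=
  μ.withDensity fun x ↦ (ν.rnDeriv (μ.trim hm) x).toNNReal

theorem Measure.measurable_toNNReal_rnDeriv (hm : m ≤ m0) (μ : Measure[m0] Ω) (ν : Measure[m] Ω) :
    Measurable[m] fun x ↦ (ν.rnDeriv (μ.trim hm) x).toNNReal :=
  (Measure.measurable_rnDeriv _ _).ennreal_toNNReal

theorem Measure.trim_extendAlong (hm : m ≤ m0) {μ : Measure[m0] Ω} {ν : Measure[m] Ω}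
    [SigmaFinite ν] [SigmaFinite (μ.trim hm)] (hνμ : ν ≪ μ.trim hm) :
    (Measure.extendAlong hm μ ν).trim hm = ν := by
  have hfinite : (fun x ↦ ((ν.rnDeriv (μ.trim hm) x).toNNReal : ℝ≥0∞)) =ᵐ[μ.trim hm]
      ν.rnDeriv (μ.trim hm) :=
    (Measure.rnDeriv_lt_top _ _).mono fun x hx ↦ ENNReal.coe_toNNReal hx.ne
  rw [Measure.extendAlong,
    trim_withDensity hm (Measure.measurable_toNNReal_rnDeriv hm μ ν).coe_nnreal_ennreal,
    withDensity_congr_ae hfinite, Measure.withDensity_rnDeriv_eq _ _ hνμ]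

theorem condExp_extendAlong_ae_eq (hm : m ≤ m0) {μ : Measure[m0] Ω} {ν : Measure[m] Ω}
    [SigmaFinite (μ.trim hm)] [hν : SigmaFinite ((Measure.extendAlong hm μ ν).trim hm)]
    {g : Ω → ℝ} (hgμ : Integrable g μ) (hgν : Integrable g (Measure.extendAlong hm μ ν)) :
    (Measure.extendAlong hm μ ν)[g | m] =ᵐ[Measure.extendAlong hm μ ν] μ[g | m] :=
  have : SigmaFinite ((μ.withDensity fun x ↦ (ν.rnDeriv (μ.trim hm) x).toNNReal).trim hm) := hν
  condExp_withDensity_ae_eq hm (Measure.measurable_toNNReal_rnDeriv hm μ ν) hgμ hgν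

end MeasureTheory

/-- The set function `P₁*` defined on `𝒜` by
`P₁*[A] = E₁[P₀[A|ℋ]]` is a probability measure on `(Ω, 𝒜)` whose restriction
to `ℋ` equals `P₁`, and whose `ℋ`-conditional probabilities satisfy
`P₁*[A|ℋ] = P₀[A|ℋ]` `P₁*`-almost surely for every `A ∈ 𝒜`. -/
theorem total_probability_extension
    {Ω : Type*} {𝒜 ℋ : MeasurableSpace Ω} (hℋ : ℋ ≤ 𝒜)
    (P₀ : @Measure Ω 𝒜) [IsProbabilityMeasure P₀]
    (P₁ : @Measure Ω ℋ) [IsProbabilityMeasure P₁]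
    (habs : P₁ ≪ P₀.trim hℋ) :
    ∃ P₁star : @Measure Ω 𝒜, IsProbabilityMeasure P₁star ∧
      (∀ A : Set Ω, MeasurableSet[𝒜] A →
        (P₁star A).toReal = ∫ ω, (condExp ℋ P₀ (A.indicator fun _ => (1:ℝ))) ω ∂P₁) ∧
      P₁star.trim hℋ = P₁ ∧
      (∀ A : Set Ω, MeasurableSet[𝒜] A →
        condExp ℋ P₁star (A.indicator fun _ => (1:ℝ))
          =ᵐ[P₁star] condExp ℋ P₀ (A.indicator fun _ => (1:ℝ))) := by
  set P₁star := Measure.extendAlong hℋ P₀ P₁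
  have htrim : P₁star.trim hℋ = P₁ := Measure.trim_extendAlong hℋ habs
  have : IsProbabilityMeasure P₁star :=
    ⟨by rw [← trim_measurableSet_eq hℋ MeasurableSet.univ, htrim, measure_univ]⟩
  have : IsProbabilityMeasure (P₁star.trim hℋ) := htrim ▸ inferInstance
  have hcond : ∀ A : Set Ω, MeasurableSet[𝒜] A →
      condExp ℋ P₁star (A.indicator fun _ ↦ (1 : ℝ))
        =ᵐ[P₁star] condExp ℋ P₀ (A.indicator fun _ ↦ (1 : ℝ)) := fun A hA ↦
    condExp_extendAlong_ae_eq hℋ ((integrable_const 1).indicator hA)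
      ((integrable_const 1).indicator hA)
  refine ⟨P₁star, inferInstance, fun A hA ↦ ?_, htrim, hcond⟩
  calc (P₁star A).toReal = ∫ ω, A.indicator (fun _ ↦ (1 : ℝ)) ω ∂P₁star :=
        (integral_indicator_one hA).symm
    _ = ∫ ω, condExp ℋ P₁star (A.indicator fun _ ↦ (1 : ℝ)) ω ∂P₁star := (integral_condExp hℋ).symm
    _ = ∫ ω, condExp ℋ P₀ (A.indicator fun _ ↦ (1 : ℝ)) ω ∂P₁star := integral_congr_ae (hcond A hA)
    _ = ∫ ω, condExp ℋ P₀ (A.indicator fun _ ↦ (1 : ℝ)) ω ∂P₁ := by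
        rw [integral_trim hℋ stronglyMeasurable_condExp, htrim]
end

section
/- Suppose P₁[λ₀ = 1] < 1. Then there exists a solution p₁ ∈ (0,1) to the equation 1 = E₁[1/(p₁ + (1−p₁)·λ₀)] if and only if E₁[λ₀] > 1 and E₁[λ₀⁻¹] > 1; and if a solution p₁ ∈ (0,1) exists, it is unique. -/
open MeasureTheory Set Filter Topology

/-!
Write `φ(p) = E₁[1 / (p + (1 - p) λ₀)]`. Strict convexity of `x ↦ x⁻¹` gives
`1 / (p + (1 - p) λ₀) < p + (1 - p) λ₀⁻¹` off `{λ₀ = 1}`, so a root of `φ = 1` in `(0, 1)` forces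
`E₁[λ₀⁻¹] > 1`; the same convexity along the segment from `p` to `1`, where `φ(1) = 1`, gives
uniqueness. The identity `p φ_λ(p) + (1 - p) φ_{λ⁻¹}(1 - p) = 1` exchanges `λ₀` and `λ₀⁻¹`, which
yields `E₁[λ₀] > 1` as well. Conversely, Fatou's lemma gives `liminf_{p → 0⁺} φ(p) ≥ E₁[λ₀⁻¹] > 1`,
and through the identity `φ < 1` somewhere when `E₁[λ₀] > 1`; `φ` is continuous on `(0, 1)` by
dominated convergence, so the intermediate value theorem produces a root.
-/

section Pointwise

variable {a y : ℝ}

lemma add_one_sub_mul_pos (ha0 : 0 < a) (ha1 : a ≤ 1) (hy : 0 ≤ y) : 0 < a + (1 - a) * y := by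
  nlinarith

lemma one_div_add_one_sub_mul_le_one_div (ha0 : 0 < a) (ha1 : a ≤ 1) (hy : 0 ≤ y) :
    1 / (a + (1 - a) * y) ≤ 1 / a :=
  one_div_le_one_div_of_le ha0 (by nlinarith)

lemma one_div_add_one_sub_mul_le (ha0 : 0 ≤ a) (ha1 : a ≤ 1) (hy : 0 < y) :
    1 / (a + (1 - a) * y) ≤ a + (1 - a) * y⁻¹ := by
  simpa [zpow_neg_one, smul_eq_mul] using (convexOn_zpow (𝕜 := ℝ) (-1)).2
    (mem_Ioi.2 one_pos) (mem_Ioi.2 hy) ha0 (sub_nonneg.2 ha1) (by ring)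

lemma one_div_add_one_sub_mul_lt (ha0 : 0 < a) (ha1 : a < 1) (hy : 0 < y) (hy1 : y ≠ 1) :
    1 / (a + (1 - a) * y) < a + (1 - a) * y⁻¹ := by
  simpa [zpow_neg_one, smul_eq_mul] using (strictConvexOn_zpow (m := -1) (by norm_num)
    (by norm_num)).2 (mem_Ioi.2 one_pos) (mem_Ioi.2 hy) hy1.symm ha0 (sub_pos.2 ha1) (by ring)

end Pointwise

lemma trim_absolutelyContinuous_of_density {Ω : Type*} {𝒜 ℋ : MeasurableSpace Ω}
    (hℋ : ℋ ≤ 𝒜) {P₀ : @Measure Ω 𝒜} [IsFiniteMeasure P₀] {μ : @Measure Ω ℋ} {A : Set Ω}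
    {a b : ℝ} {f g : Ω → ℝ}
    (hf : ∀ H, MeasurableSet[ℋ] H → (P₀ (H ∩ A)).toReal = a * ∫ ω in H, f ω ∂μ)
    (hg : ∀ H, MeasurableSet[ℋ] H → (P₀ (H ∩ Aᶜ)).toReal = b * ∫ ω in H, g ω ∂μ) :
    P₀.trim hℋ ≪ μ := by
  refine Measure.AbsolutelyContinuous.mk fun H hH hμH => ?_
  have hnull : ∀ (B : Set Ω) (c : ℝ) (k : Ω → ℝ),
      (P₀ (H ∩ B)).toReal = c * ∫ ω in H, k ω ∂μ → P₀ (H ∩ B) = 0 := fun B c k h => by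
    rw [Measure.restrict_eq_zero.2 hμH, integral_zero_measure, mul_zero,
      ENNReal.toReal_eq_zero_iff] at h
    exact h.resolve_right (measure_ne_top _ _)
  rw [trim_measurableSet_eq hℋ hH, ← nonpos_iff_eq_zero]
  calc P₀ H ≤ P₀ (H ∩ A) + P₀ (H ∩ Aᶜ) := sdiff_eq H A ▸ measure_le_inter_add_sdiff P₀ H A
    _ = 0 := by rw [hnull A a f (hf H hH), hnull Aᶜ b g (hg H hH), add_zero]

section TotalOdds

variable {Ω : Type*} {mΩ : MeasurableSpace Ω} {P : Measure Ω} {l : Ω → ℝ} {p q : ℝ}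

/-- `p` times this is the mean posterior probability of `A` under the prior `p`. -/
noncomputable def totalOddsIntegral (P : Measure Ω) (l : Ω → ℝ) (p : ℝ) : ℝ :=
  ∫ ω, 1 / (p + (1 - p) * l ω) ∂P

lemma integrable_one_div_add_one_sub_mul [IsFiniteMeasure P] (hm : Measurable l)
    (hpos : ∀ᵐ ω ∂P, 0 < l ω) (hp0 : 0 < p) (hp1 : p ≤ 1) :
    Integrable (fun ω => 1 / (p + (1 - p) * l ω)) P := by
  refine (integrable_const (1 / p)).mono' (Measurable.aestronglyMeasurable (by fun_prop)) ?_
  filter_upwards [hpos] with ω hω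
  rw [Real.norm_of_nonneg (one_div_pos.2 (add_one_sub_mul_pos hp0 hp1 hω.le)).le]
  exact one_div_add_one_sub_mul_le_one_div hp0 hp1 hω.le

lemma ofReal_totalOddsIntegral [IsFiniteMeasure P] (hm : Measurable l)
    (hpos : ∀ᵐ ω ∂P, 0 < l ω) (hp0 : 0 < p) (hp1 : p ≤ 1) :
    ENNReal.ofReal (totalOddsIntegral P l p) =
      ∫⁻ ω, ENNReal.ofReal (1 / (p + (1 - p) * l ω)) ∂P :=
  ofReal_integral_eq_lintegral_ofReal (integrable_one_div_add_one_sub_mul hm hpos hp0 hp1)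
    (hpos.mono fun _ hω => (one_div_pos.2 (add_one_sub_mul_pos hp0 hp1 hω.le)).le)

lemma continuousOn_totalOddsIntegral [IsFiniteMeasure P] (hm : Measurable l)
    (hpos : ∀ᵐ ω ∂P, 0 < l ω) : ContinuousOn (totalOddsIntegral P l) (Ioo 0 1) := by
  intro p ⟨hp0, hp1⟩
  refine (continuousAt_of_dominated (bound := fun _ => 2 / p)
    (.of_forall fun x => Measurable.aestronglyMeasurable (by fun_prop)) ?_ (integrable_const _)
    ?_).continuousWithinAt
  · filter_upwards [Ioo_mem_nhds (half_lt_self hp0) hp1] with x ⟨hx0, hx1⟩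
    filter_upwards [hpos] with ω hω
    have hx0' : 0 < x := (half_pos hp0).trans hx0
    rw [Real.norm_of_nonneg (one_div_pos.2 (add_one_sub_mul_pos hx0' hx1.le hω.le)).le]
    calc 1 / (x + (1 - x) * l ω) ≤ 1 / x := one_div_add_one_sub_mul_le_one_div hx0' hx1.le hω.le
      _ ≤ 2 / p := by rw [div_le_div_iff₀ hx0' hp0]; linarith
  · filter_upwards [hpos] with ω hω
    exact continuousAt_const.div (by fun_prop) (add_one_sub_mul_pos hp0 hp1.le hω.le).ne'

/-- `λ ↦ λ⁻¹` together with `p ↦ 1 - p` exchanges the roles of `A` and `Aᶜ`. -/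
lemma mul_totalOddsIntegral_add_mul_totalOddsIntegral_inv [IsProbabilityMeasure P]
    (hm : Measurable l) (hpos : ∀ᵐ ω ∂P, 0 < l ω) (hp : p ∈ Ioo 0 1) :
    p * totalOddsIntegral P l p + (1 - p) * totalOddsIntegral P l⁻¹ (1 - p) = 1 := by
  obtain ⟨hp0, hp1⟩ := hp
  have hinv : ∀ᵐ ω ∂P, 0 < l⁻¹ ω := hpos.mono fun _ hω => inv_pos.2 hω
  unfold totalOddsIntegral
  rw [← integral_const_mul, ← integral_const_mul, ← integral_add
    ((integrable_one_div_add_one_sub_mul hm hpos hp0 hp1.le).const_mul _)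
    ((integrable_one_div_add_one_sub_mul hm.inv hinv (sub_pos.2 hp1) (by linarith)).const_mul _)]
  calc _ = ∫ _, (1 : ℝ) ∂P := integral_congr_ae <| hpos.mono fun ω hω => by
        have hd := add_one_sub_mul_pos hp0 hp1.le hω.le
        have hl := hω.ne'
        simp only [Pi.inv_apply, sub_sub_cancel]
        field_simp
        ring
    _ = 1 := by simp

lemma one_lt_lintegral_of_lt_add_one_sub_mul [IsProbabilityMeasure P] {f h : Ω → ℝ} {a : ℝ}
    {s : Set Ω} (ha0 : 0 ≤ a) (ha1 : a ≤ 1) (hf : ∫⁻ ω, ENNReal.ofReal (f ω) ∂P = 1)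
    (hf0 : ∀ᵐ ω ∂P, 0 ≤ f ω) (hh : Measurable h) (hh0 : ∀ᵐ ω ∂P, 0 ≤ h ω)
    (hle : ∀ᵐ ω ∂P, f ω ≤ a + (1 - a) * h ω)
    (hs : P s ≠ 0) (hlt : ∀ᵐ ω ∂P, ω ∈ s → f ω < a + (1 - a) * h ω) :
    1 < ∫⁻ ω, ENNReal.ofReal (h ω) ∂P := by
  have hsplit : ∫⁻ ω, ENNReal.ofReal (a + (1 - a) * h ω) ∂P =
      ENNReal.ofReal a + ENNReal.ofReal (1 - a) * ∫⁻ ω, ENNReal.ofReal (h ω) ∂P := by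
    rw [lintegral_congr_ae (hh0.mono fun ω hω => by
        rw [ENNReal.ofReal_add ha0 (mul_nonneg (sub_nonneg.2 ha1) hω),
          ENNReal.ofReal_mul (sub_nonneg.2 ha1)]),
      lintegral_add_left measurable_const, lintegral_const, measure_univ, mul_one,
      lintegral_const_mul _ hh.ennreal_ofReal]
  have hlt' : 1 < ENNReal.ofReal a + ENNReal.ofReal (1 - a) * ∫⁻ ω, ENNReal.ofReal (h ω) ∂P := by
    rw [← hsplit, ← hf]
    refine lintegral_strict_mono_of_ae_le_of_ae_lt_on (by fun_prop) (hf ▸ ENNReal.one_ne_top)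
      (hle.mono fun _ => ENNReal.ofReal_le_ofReal) hs ?_
    filter_upwards [hf0, hlt] with ω hω0 hω hωs
    exact ENNReal.ofReal_lt_ofReal_iff'.2 ⟨hω hωs, hω0.trans_lt (hω hωs)⟩
  by_contra! hle1
  refine hlt'.not_ge ?_
  calc _ ≤ ENNReal.ofReal a + ENNReal.ofReal (1 - a) * 1 := by gcongr
    _ = 1 := by rw [mul_one, ← ENNReal.ofReal_add ha0 (sub_nonneg.2 ha1), add_sub_cancel,
      ENNReal.ofReal_one]

lemma one_lt_lintegral_inv_of_totalOddsIntegral_eq_one [IsProbabilityMeasure P]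
    (hm : Measurable l) (hpos : ∀ᵐ ω ∂P, 0 < l ω) (hne : P {ω | l ω ≠ 1} ≠ 0)
    (hp : p ∈ Ioo 0 1) (h : totalOddsIntegral P l p = 1) :
    1 < ∫⁻ ω, ENNReal.ofReal (l ω)⁻¹ ∂P := by
  obtain ⟨hp0, hp1⟩ := hp
  refine one_lt_lintegral_of_lt_add_one_sub_mul hp0.le hp1.le
    (by rw [← ofReal_totalOddsIntegral hm hpos hp0 hp1.le, h, ENNReal.ofReal_one])
    (hpos.mono fun _ hω => (one_div_pos.2 (add_one_sub_mul_pos hp0 hp1.le hω.le)).le)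
    hm.inv (hpos.mono fun _ hω => (inv_pos.2 hω).le)
    (hpos.mono fun _ hω => one_div_add_one_sub_mul_le hp0.le hp1.le hω) hne
    (hpos.mono fun _ hω hω1 => one_div_add_one_sub_mul_lt hp0 hp1 hω hω1)

lemma eq_of_totalOddsIntegral_eq_one [IsProbabilityMeasure P] (hm : Measurable l)
    (hpos : ∀ᵐ ω ∂P, 0 < l ω) (hne : P {ω | l ω ≠ 1} ≠ 0) (hp : p ∈ Ioo 0 1)
    (hq : q ∈ Ioo 0 1) (hφp : totalOddsIntegral P l p = 1) (hφq : totalOddsIntegral P l q = 1) :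
    p = q := by
  wlog hpq : p < q generalizing p q
  · rcases (not_lt.1 hpq).lt_or_eq with hqp | hqp
    exacts [(this hq hp hφq hφp hqp).symm, hqp.symm]
  obtain ⟨hp0, hp1⟩ := hp
  obtain ⟨hq0, hq1⟩ := hq
  -- `q + (1 - q) λ = s + (1 - s) (p + (1 - p) λ)`, so strict convexity of `x ↦ x⁻¹` compares
  -- the integrands at `q` and at `p`
  set s := (q - p) / (1 - p)
  have hs0 : 0 < s := div_pos (sub_pos.2 hpq) (sub_pos.2 hp1)
  have hs1 : s < 1 := (div_lt_one (sub_pos.2 hp1)).2 (by linarith)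
  have hmix : ∀ ω, q + (1 - q) * l ω = s + (1 - s) * (p + (1 - p) * l ω) := fun ω => by
    simp only [s]
    field_simp [(sub_pos.2 hp1).ne']
    ring
  have key := one_lt_lintegral_of_lt_add_one_sub_mul (P := P) (s := {ω | l ω ≠ 1})
    (f := fun ω => 1 / (q + (1 - q) * l ω)) (h := fun ω => 1 / (p + (1 - p) * l ω))
    hs0.le hs1.le
    (by rw [← ofReal_totalOddsIntegral hm hpos hq0 hq1.le, hφq, ENNReal.ofReal_one])
    (hpos.mono fun _ hω => (one_div_pos.2 (add_one_sub_mul_pos hq0 hq1.le hω.le)).le)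
    (Measurable.div measurable_const (by fun_prop))
    (hpos.mono fun _ hω => (one_div_pos.2 (add_one_sub_mul_pos hp0 hp1.le hω.le)).le)
    (hpos.mono fun ω hω => by
      simpa only [hmix, one_div] using one_div_add_one_sub_mul_le hs0.le hs1.le
        (add_one_sub_mul_pos hp0 hp1.le hω.le))
    hne
    (hpos.mono fun ω hω hω1 => by
      have hd1 : p + (1 - p) * l ω ≠ 1 := fun hd => hω1 (by nlinarith)
      simpa only [hmix, one_div] using
        one_div_add_one_sub_mul_lt hs0 hs1 (add_one_sub_mul_pos hp0 hp1.le hω.le) hd1)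
  rw [← ofReal_totalOddsIntegral hm hpos hp0 hp1.le, hφp, ENNReal.ofReal_one] at key
  exact (lt_irrefl 1 key).elim

lemma exists_one_lt_totalOddsIntegral [IsFiniteMeasure P] (hm : Measurable l)
    (hpos : ∀ᵐ ω ∂P, 0 < l ω) (h : 1 < ∫⁻ ω, ENNReal.ofReal (l ω)⁻¹ ∂P) :
    ∃ p ∈ Ioo 0 1, 1 < totalOddsIntegral P l p := by
  have hlim : ∀ᵐ ω ∂P, Tendsto (fun p => ENNReal.ofReal (1 / (p + (1 - p) * l ω))) (𝓝[>] 0)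
      (𝓝 (ENNReal.ofReal (l ω)⁻¹)) := by
    filter_upwards [hpos] with ω hω
    have hcont : ContinuousAt (fun p : ℝ => ENNReal.ofReal (1 / (p + (1 - p) * l ω))) 0 :=
      ENNReal.continuous_ofReal.continuousAt.comp
        (continuousAt_const.div (by fun_prop) (by simpa using hω.ne'))
    simpa using hcont.tendsto.mono_left nhdsWithin_le_nhds
  have hfatou : ∫⁻ ω, ENNReal.ofReal (l ω)⁻¹ ∂P ≤
      liminf (fun p => ∫⁻ ω, ENNReal.ofReal (1 / (p + (1 - p) * l ω)) ∂P) (𝓝[>] 0) :=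
    calc _ = ∫⁻ ω, liminf (fun p => ENNReal.ofReal (1 / (p + (1 - p) * l ω))) (𝓝[>] 0) ∂P :=
          lintegral_congr_ae (hlim.mono fun _ hω => hω.liminf_eq.symm)
      _ ≤ _ := lintegral_liminf_le fun _ => by fun_prop
  obtain ⟨p, hp1, hp⟩ :=
    ((eventually_lt_of_lt_liminf (h.trans_le hfatou)).and (Ioo_mem_nhdsGT one_pos)).exists
  refine ⟨p, hp, ?_⟩
  rwa [← ofReal_totalOddsIntegral hm hpos hp.1 hp.2.le, ENNReal.one_lt_ofReal] at hp1

lemma exists_totalOddsIntegral_lt_one [IsProbabilityMeasure P] (hm : Measurable l)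
    (hpos : ∀ᵐ ω ∂P, 0 < l ω) (h : 1 < ∫⁻ ω, ENNReal.ofReal (l ω) ∂P) :
    ∃ p ∈ Ioo 0 1, totalOddsIntegral P l p < 1 := by
  have hinv : ∀ᵐ ω ∂P, 0 < l⁻¹ ω := hpos.mono fun _ hω => inv_pos.2 hω
  obtain ⟨q, ⟨hq0, hq1⟩, hφq⟩ :=
    exists_one_lt_totalOddsIntegral hm.inv hinv (by simpa only [Pi.inv_apply, inv_inv] using h)
  have hp : 1 - q ∈ Ioo 0 1 := ⟨sub_pos.2 hq1, sub_lt_self 1 hq0⟩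
  have hsymm := mul_totalOddsIntegral_add_mul_totalOddsIntegral_inv hm hpos hp
  rw [sub_sub_cancel] at hsymm
  refine ⟨1 - q, hp, ?_⟩
  nlinarith

lemma exists_totalOddsIntegral_eq_one [IsProbabilityMeasure P] (hm : Measurable l)
    (hpos : ∀ᵐ ω ∂P, 0 < l ω) (hl : 1 < ∫⁻ ω, ENNReal.ofReal (l ω) ∂P)
    (hlinv : 1 < ∫⁻ ω, ENNReal.ofReal (l ω)⁻¹ ∂P) :
    ∃ p ∈ Ioo 0 1, totalOddsIntegral P l p = 1 := by
  obtain ⟨a, ha, hφa⟩ := exists_one_lt_totalOddsIntegral hm hpos hlinv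
  obtain ⟨b, hb, hφb⟩ := exists_totalOddsIntegral_lt_one hm hpos hl
  have hsub : uIcc a b ⊆ Ioo 0 1 := ordConnected_Ioo.uIcc_subset ha hb
  obtain ⟨p, hp, hφp⟩ := intermediate_value_uIcc
    ((continuousOn_totalOddsIntegral hm hpos).mono hsub) (mem_uIcc.2 (.inr ⟨hφb.le, hφa.le⟩))
  exact ⟨p, hsub hp, hφp⟩

theorem exists_totalOddsIntegral_eq_one_iff [IsProbabilityMeasure P] (hm : Measurable l)
    (hpos : ∀ᵐ ω ∂P, 0 < l ω) (hne : P {ω | l ω ≠ 1} ≠ 0) :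
    (∃ p ∈ Ioo 0 1, totalOddsIntegral P l p = 1) ↔
      1 < ∫⁻ ω, ENNReal.ofReal (l ω) ∂P ∧ 1 < ∫⁻ ω, ENNReal.ofReal (l ω)⁻¹ ∂P := by
  refine ⟨fun ⟨p, hp, hφp⟩ => ⟨?_, one_lt_lintegral_inv_of_totalOddsIntegral_eq_one hm hpos hne
    hp hφp⟩, fun ⟨hl, hlinv⟩ => exists_totalOddsIntegral_eq_one hm hpos hl hlinv⟩
  have hq : 1 - p ∈ Ioo 0 1 := ⟨sub_pos.2 hp.2, sub_lt_self 1 hp.1⟩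
  have hφq : totalOddsIntegral P l⁻¹ (1 - p) = 1 := by
    have hsymm := mul_totalOddsIntegral_add_mul_totalOddsIntegral_inv hm hpos hp
    rw [hφp] at hsymm
    exact (mul_right_inj' (sub_pos.2 hp.2).ne').1 (by linarith)
  simpa only [Pi.inv_apply, inv_inv] using one_lt_lintegral_inv_of_totalOddsIntegral_eq_one
    hm.inv (hpos.mono fun _ hω => inv_pos.2 hω) (by simpa only [Pi.inv_apply, ne_eq, inv_eq_one])
    hq hφq

end TotalOdds

theorem total_odds_existence_uniqueness_general
    {Ω : Type*} {𝒜 ℋ : MeasurableSpace Ω} (hℋ : ℋ ≤ 𝒜)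
    (P₀ : @Measure Ω 𝒜) [IsProbabilityMeasure P₀]
    (P₁ : @Measure Ω ℋ) [IsProbabilityMeasure P₁] (habs : P₁ ≪ P₀.trim hℋ)
    (A : Set Ω)
    (p₀ : ℝ)
    (μ : @Measure Ω ℋ)
    (fA fAc : Ω → ℝ)
    (hfA_meas : @Measurable Ω ℝ ℋ _ fA) (hfAc_meas : @Measurable Ω ℝ ℋ _ fAc)
    (hfA_pos : ∀ᵐ ω ∂μ, 0 < fA ω) (hfAc_pos : ∀ᵐ ω ∂μ, 0 < fAc ω)
    (hdensA : ∀ H : Set Ω, MeasurableSet[ℋ] H →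
      (P₀ (H ∩ A)).toReal = p₀ * ∫ ω in H, fA ω ∂μ)
    (hdensAc : ∀ H : Set Ω, MeasurableSet[ℋ] H →
      (P₀ (H ∩ Aᶜ)).toReal = (1 - p₀) * ∫ ω in H, fAc ω ∂μ)
    (hlam : P₁ {ω | fAc ω / fA ω = 1} < 1) :
    ((∃ p₁ ∈ Set.Ioo (0:ℝ) 1,
        (1:ℝ) = ∫ ω, 1 / (p₁ + (1 - p₁) * (fAc ω / fA ω)) ∂P₁) ↔
      (1 < ∫⁻ ω, ENNReal.ofReal (fAc ω / fA ω) ∂P₁ ∧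
        1 < ∫⁻ ω, ENNReal.ofReal (fA ω / fAc ω) ∂P₁)) ∧
    (∀ p₁ ∈ Set.Ioo (0:ℝ) 1, ∀ q₁ ∈ Set.Ioo (0:ℝ) 1,
      (1:ℝ) = ∫ ω, 1 / (p₁ + (1 - p₁) * (fAc ω / fA ω)) ∂P₁ →
      (1:ℝ) = ∫ ω, 1 / (q₁ + (1 - q₁) * (fAc ω / fA ω)) ∂P₁ → p₁ = q₁) := by
  have hP₁μ : P₁ ≪ μ := habs.trans (trim_absolutelyContinuous_of_density hℋ hdensA hdensAc)
  have hm : Measurable[ℋ] fun ω => fAc ω / fA ω := hfAc_meas.div hfA_meas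
  have hpos : ∀ᵐ ω ∂P₁, 0 < fAc ω / fA ω := by
    filter_upwards [hP₁μ.ae_le hfA_pos, hP₁μ.ae_le hfAc_pos] with ω hA hAc
    exact div_pos hAc hA
  have hne : P₁ {ω | fAc ω / fA ω ≠ 1} ≠ 0 := by
    have hmeas : MeasurableSet[ℋ] {ω | fAc ω / fA ω = 1} := hm (measurableSet_singleton 1)
    rw [← compl_ofPred, Ne, prob_compl_eq_zero_iff hmeas]
    exact hlam.ne
  simp only [eq_comm (a := (1 : ℝ)), ← inv_div (fAc _)]
  exact ⟨exists_totalOddsIntegral_eq_one_iff hm hpos hne,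
    fun p hp q hq => eq_of_totalOddsIntegral_eq_one hm hpos hne hp hq⟩

/-- **Law of total odds, part (i).** Suppose `P₁[λ₀ = 1] < 1`. Then there
exists a solution `p₁ ∈ (0,1)` to `1 = E₁[1/(p₁ + (1−p₁)·λ₀)]` if and only if
`E₁[λ₀] > 1` and `E₁[λ₀⁻¹] > 1` (values possibly `+∞`); and any solution in `(0,1)`
is unique. -/
theorem total_odds_existence_uniqueness
    {Ω : Type*} {𝒜 ℋ : MeasurableSpace Ω} (hℋ : ℋ ≤ 𝒜)
    (P₀ : @Measure Ω 𝒜) [IsProbabilityMeasure P₀]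
    (P₁ : @Measure Ω ℋ) [IsProbabilityMeasure P₁] (habs : P₁ ≪ P₀.trim hℋ)
    (A : Set Ω) (hA : MeasurableSet[𝒜] A)
    (p₀ : ℝ) (hp₀ : p₀ = (P₀ A).toReal) (hp₀0 : 0 < p₀) (hp₀1 : p₀ < 1)
    (μ : @Measure Ω ℋ) [SigmaFinite μ]
    (fA fAc : Ω → ℝ)
    (hfA_meas : @Measurable Ω ℝ ℋ _ fA) (hfAc_meas : @Measurable Ω ℝ ℋ _ fAc)
    (hfA_int : Integrable fA μ) (hfAc_int : Integrable fAc μ)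
    (hfA_pos : ∀ᵐ ω ∂μ, 0 < fA ω) (hfAc_pos : ∀ᵐ ω ∂μ, 0 < fAc ω)
    (hdensA : ∀ H : Set Ω, MeasurableSet[ℋ] H →
      (P₀ (H ∩ A)).toReal = p₀ * ∫ ω in H, fA ω ∂μ)
    (hdensAc : ∀ H : Set Ω, MeasurableSet[ℋ] H →
      (P₀ (H ∩ Aᶜ)).toReal = (1 - p₀) * ∫ ω in H, fAc ω ∂μ)
    (hlam : P₁ {ω | fAc ω / fA ω = 1} < 1) :
    ((∃ p₁ ∈ Set.Ioo (0:ℝ) 1,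
        (1:ℝ) = ∫ ω, 1 / (p₁ + (1 - p₁) * (fAc ω / fA ω)) ∂P₁) ↔
      (1 < ∫⁻ ω, ENNReal.ofReal (fAc ω / fA ω) ∂P₁ ∧
        1 < ∫⁻ ω, ENNReal.ofReal (fA ω / fAc ω) ∂P₁)) ∧
    (∀ p₁ ∈ Set.Ioo (0:ℝ) 1, ∀ q₁ ∈ Set.Ioo (0:ℝ) 1,
      (1:ℝ) = ∫ ω, 1 / (p₁ + (1 - p₁) * (fAc ω / fA ω)) ∂P₁ →
      (1:ℝ) = ∫ ω, 1 / (q₁ + (1 - q₁) * (fAc ω / fA ω)) ∂P₁ → p₁ = q₁) :=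
  total_odds_existence_uniqueness_general hℋ P₀ P₁ habs A p₀ μ fA fAc hfA_meas hfAc_meas hfA_pos
    hfAc_pos hdensA hdensAc hlam
end

section
/- Suppose P₁[λ₀ = 1] < 1 and p₁ ∈ (0,1) solves 1 = E₁[1/(p₁ + (1−p₁)·λ₀)]. Define, for B ∈ ℋ^A with any representation B = (A ∩ H) ∪ (A^c ∩ G) where H, G ∈ ℋ, P₁*[B] = E₁[1_H · p₁/(p₁ + (1−p₁)λ₀)] + E₁[1_G · (1−p₁)λ₀/(p₁ + (1−p₁)λ₀)]. Then P₁* is well defined (independent of the chosen representation), is a probability measure on ℋ^A, and its restriction to ℋ equals P₁. -/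
/-!
On `ℋ`, the traces `P₀(· ∩ A)` and `P₀(· ∩ Aᶜ)` have the `μ`-densities `p₀ f_A` and
`(1 - p₀) f_{Aᶜ}`, which are positive `μ`-a.e.; so both traces are equivalent to `μ`, and `P₁` is
absolutely continuous with respect to each of them. This lets us realise `P₁*` as a measure with a
`P₀`-density: on `A` it is `dP₁ / dP₀(· ∩ A)` times the weight `p₁ / (p₁ + (1 - p₁) λ₀)`, on `Aᶜ`
it is `dP₁ / dP₀(· ∩ Aᶜ)` times the complementary weight. A measure is a function of sets, so the
value of `P₁*` does not depend on how a set is written as `(A ∩ H) ∪ (Aᶜ ∩ G)`; and since the two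
weights add up to `1`, `P₁*` agrees with `P₁` on `ℋ`.
-/

open MeasureTheory Set

open scoped ENNReal

theorem ENNReal.ofReal_div_add_ofReal_div_eq_one {a b : ℝ} (ha : 0 ≤ a) (hb : 0 ≤ b)
    (hab : 0 < a + b) : ENNReal.ofReal (a / (a + b)) + ENNReal.ofReal (b / (a + b)) = 1 := by
  rw [← ENNReal.ofReal_add (div_nonneg ha hab.le) (div_nonneg hb hab.le), ← add_div,
    div_self hab.ne', ENNReal.ofReal_one]

namespace MeasureTheory

theorem toReal_setLIntegral_ofReal {Ω : Type*} [MeasurableSpace Ω] {ρ : Measure Ω} {f : Ω → ℝ}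
    (hf : AEStronglyMeasurable f ρ) (hf_nonneg : 0 ≤ᵐ[ρ] f) {H : Set Ω} (hH : MeasurableSet H) :
    (∫⁻ ω in H, ENNReal.ofReal (f ω) ∂ρ).toReal =
      ∫ ω, H.indicator (fun _ => (1 : ℝ)) ω * f ω ∂ρ := by
  simp_rw [← indicator_mul_left, one_mul]
  rw [integral_indicator hH,
    integral_eq_lintegral_of_nonneg_ae (ae_restrict_of_ae hf_nonneg) hf.restrict]

variable {Ω : Type*} {ℋ 𝒜 : MeasurableSpace Ω} {ν : Measure Ω} {S A : Set Ω}

theorem trim_restrict_eq_withDensity_ofReal [IsFiniteMeasure ν] (hℋ : ℋ ≤ 𝒜)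
    {μ : Measure[ℋ] Ω} {f : Ω → ℝ} (hf_int : Integrable f μ) (hf_nonneg : 0 ≤ᵐ[μ] f)
    (hdens : ∀ H, MeasurableSet[ℋ] H → (ν (H ∩ S)).toReal = ∫ ω in H, f ω ∂μ) :
    (ν.restrict S).trim hℋ = μ.withDensity fun ω => ENNReal.ofReal (f ω) := by
  refine @Measure.ext _ ℋ _ _ fun H hH => ?_
  rw [trim_measurableSet_eq hℋ hH, Measure.restrict_apply (hℋ H hH), withDensity_apply _ hH,
    ← ofReal_integral_eq_lintegral_ofReal hf_int.restrict (ae_restrict_of_ae hf_nonneg),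
    ← hdens H hH, ENNReal.ofReal_toReal (measure_ne_top _ _)]

theorem trim_restrict_mutually_absolutelyContinuous_of_density [IsFiniteMeasure ν]
    (hℋ : ℋ ≤ 𝒜) {μ : Measure[ℋ] Ω} {c : ℝ} {f : Ω → ℝ} (hc : 0 < c)
    (hf_meas : Measurable[ℋ] f) (hf_int : Integrable f μ) (hf_pos : ∀ᵐ ω ∂μ, 0 < f ω)
    (hdens : ∀ H, MeasurableSet[ℋ] H → (ν (H ∩ S)).toReal = c * ∫ ω in H, f ω ∂μ) :
    μ ≪ (ν.restrict S).trim hℋ ∧ (ν.restrict S).trim hℋ ≪ μ := by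
  have hcf_pos : ∀ᵐ ω ∂μ, 0 < c * f ω := hf_pos.mono fun ω h => mul_pos hc h
  rw [trim_restrict_eq_withDensity_ofReal hℋ (hf_int.const_mul c) (hcf_pos.mono fun ω h => h.le)
    fun H hH => (hdens H hH).trans (integral_const_mul _ _).symm]
  exact ⟨withDensity_absolutelyContinuous' (hf_meas.const_mul c).ennreal_ofReal.aemeasurable
    (hcf_pos.mono fun ω h => (ENNReal.ofReal_pos.2 h).ne'), withDensity_absolutelyContinuous _ _⟩

theorem trim_absolutelyContinuous_of_restrict_compl (hℋ : ℋ ≤ 𝒜) (hA : MeasurableSet A)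
    {μ : Measure[ℋ] Ω} (hμA : (ν.restrict A).trim hℋ ≪ μ) (hμAc : (ν.restrict Aᶜ).trim hℋ ≪ μ) :
    ν.trim hℋ ≪ μ := by
  rw [← Measure.restrict_add_restrict_compl (μ := ν) hA, trim_add]
  exact hμA.add_left hμAc

theorem setLIntegral_inter_rnDeriv_trim_restrict_mul [IsFiniteMeasure ν] (hℋ : ℋ ≤ 𝒜)
    {ρ : Measure[ℋ] Ω} [SigmaFinite ρ] (hρ : ρ ≪ (ν.restrict S).trim hℋ) {f : Ω → ℝ≥0∞}
    (hf : Measurable[ℋ] f) {H : Set Ω} (hH : MeasurableSet[ℋ] H) :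
    ∫⁻ ω in S ∩ H, ρ.rnDeriv ((ν.restrict S).trim hℋ) ω * f ω ∂ν = ∫⁻ ω in H, f ω ∂ρ := by
  rw [inter_comm, ← Measure.restrict_restrict (hℋ H hH),
    ← setLIntegral_trim hℋ (f := fun ω => ρ.rnDeriv _ ω * f ω)
      ((Measure.measurable_rnDeriv _ _).mul hf) hH,
    setLIntegral_rnDeriv_mul hρ hf.aemeasurable hH]

open Classical in
/-- For `ν = P₀`, `ρ = P₁` and the posterior weights `g`, `h`, its trim to `ℋ^A` is `P₁*`. -/
noncomputable def Measure.splitExtension (hℋ : ℋ ≤ 𝒜) (ν : Measure Ω) (A : Set Ω)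
    (ρ : Measure[ℋ] Ω) (g h : Ω → ℝ≥0∞) : Measure Ω :=
  ν.withDensity (A.piecewise (fun ω => ρ.rnDeriv ((ν.restrict A).trim hℋ) ω * g ω)
    (fun ω => ρ.rnDeriv ((ν.restrict Aᶜ).trim hℋ) ω * h ω))

namespace Measure

variable [IsFiniteMeasure ν] (hℋ : ℋ ≤ 𝒜) {ρ : Measure[ℋ] Ω} [SigmaFinite ρ]
  {g h : Ω → ℝ≥0∞}

theorem splitExtension_inter (hA : MeasurableSet A) (hρA : ρ ≪ (ν.restrict A).trim hℋ)
    (hg : Measurable[ℋ] g) {H : Set Ω} (hH : MeasurableSet[ℋ] H) :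
    splitExtension hℋ ν A ρ g h (A ∩ H) = ∫⁻ ω in H, g ω ∂ρ := by
  classical
  rw [splitExtension, withDensity_apply _ (hA.inter (hℋ H hH)),
    setLIntegral_congr_fun (hA.inter (hℋ H hH)) ((piecewise_eqOn A _ _).mono inter_subset_left),
    setLIntegral_inter_rnDeriv_trim_restrict_mul hℋ hρA hg hH]

theorem splitExtension_compl_inter (hA : MeasurableSet A) (hρAc : ρ ≪ (ν.restrict Aᶜ).trim hℋ)
    (hh : Measurable[ℋ] h) {G : Set Ω} (hG : MeasurableSet[ℋ] G) :
    splitExtension hℋ ν A ρ g h (Aᶜ ∩ G) = ∫⁻ ω in G, h ω ∂ρ := by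
  classical
  rw [splitExtension, withDensity_apply _ (hA.compl.inter (hℋ G hG)),
    setLIntegral_congr_fun (hA.compl.inter (hℋ G hG))
      ((piecewise_eqOn_compl A _ _).mono inter_subset_left),
    setLIntegral_inter_rnDeriv_trim_restrict_mul hℋ hρAc hh hG]

theorem splitExtension_union (hA : MeasurableSet A) (hρA : ρ ≪ (ν.restrict A).trim hℋ)
    (hρAc : ρ ≪ (ν.restrict Aᶜ).trim hℋ) (hg : Measurable[ℋ] g) (hh : Measurable[ℋ] h)
    {H G : Set Ω} (hH : MeasurableSet[ℋ] H) (hG : MeasurableSet[ℋ] G) :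
    splitExtension hℋ ν A ρ g h (A ∩ H ∪ Aᶜ ∩ G) = ∫⁻ ω in H, g ω ∂ρ + ∫⁻ ω in G, h ω ∂ρ := by
  rw [measure_union (disjoint_compl_right.mono inter_subset_left inter_subset_left)
      (hA.compl.inter (hℋ G hG)),
    splitExtension_inter hℋ hA hρA hg hH, splitExtension_compl_inter hℋ hA hρAc hh hG]

theorem splitExtension_of_measurableSet (hA : MeasurableSet A)
    (hρA : ρ ≪ (ν.restrict A).trim hℋ) (hρAc : ρ ≪ (ν.restrict Aᶜ).trim hℋ)
    (hg : Measurable[ℋ] g) (hh : Measurable[ℋ] h) (hgh : ∀ᵐ ω ∂ρ, g ω + h ω = 1)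
    {H : Set Ω} (hH : MeasurableSet[ℋ] H) :
    splitExtension hℋ ν A ρ g h H = ρ H := by
  conv_lhs => rw [← inter_union_compl H A, inter_comm, inter_comm H]
  rw [splitExtension_union hℋ hA hρA hρAc hg hh hH hH, ← lintegral_add_left hg,
    setLIntegral_congr_fun_ae hH (hgh.mono fun ω hω _ => hω), setLIntegral_one]

end Measure

theorem exists_measure_sup_generateFrom_singleton [IsFiniteMeasure ν] (hℋ : ℋ ≤ 𝒜)
    (hA : MeasurableSet A) {ρ : Measure[ℋ] Ω} [IsProbabilityMeasure ρ] {g h : Ω → ℝ≥0∞}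
    (hρA : ρ ≪ (ν.restrict A).trim hℋ) (hρAc : ρ ≪ (ν.restrict Aᶜ).trim hℋ)
    (hg : Measurable[ℋ] g) (hh : Measurable[ℋ] h) (hgh : ∀ᵐ ω ∂ρ, g ω + h ω = 1) :
    ∃ Q : Measure[ℋ ⊔ MeasurableSpace.generateFrom {A}] Ω, IsProbabilityMeasure Q ∧
      (∀ H G, MeasurableSet[ℋ] H → MeasurableSet[ℋ] G →
        Q (A ∩ H ∪ Aᶜ ∩ G) = ∫⁻ ω in H, g ω ∂ρ + ∫⁻ ω in G, h ω ∂ρ) ∧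
      ∀ H, MeasurableSet[ℋ] H → Q H = ρ H := by
  have hle : ℋ ⊔ MeasurableSpace.generateFrom {A} ≤ 𝒜 :=
    sup_le hℋ (MeasurableSpace.generateFrom_le fun s hs => (mem_singleton_iff.1 hs) ▸ hA)
  have hA' : MeasurableSet[ℋ ⊔ MeasurableSpace.generateFrom {A}] A :=
    le_sup_right (a := ℋ) _ (MeasurableSpace.measurableSet_generateFrom rfl)
  have hlift : ∀ H, MeasurableSet[ℋ] H → MeasurableSet[ℋ ⊔ MeasurableSpace.generateFrom {A}] H :=
    fun H hH => le_sup_left (b := MeasurableSpace.generateFrom {A}) H hH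
  refine ⟨(Measure.splitExtension hℋ ν A ρ g h).trim hle, ⟨?_⟩, fun H G hH hG => ?_,
    fun H hH => ?_⟩
  · rw [trim_measurableSet_eq hle MeasurableSet.univ, Measure.splitExtension_of_measurableSet
      hℋ hA hρA hρAc hg hh hgh MeasurableSet.univ, measure_univ]
  · rw [trim_measurableSet_eq hle ((hA'.inter (hlift H hH)).union (hA'.compl.inter (hlift G hG))),
      Measure.splitExtension_union hℋ hA hρA hρAc hg hh hH hG]
  · rw [trim_measurableSet_eq hle (hlift H hH),
      Measure.splitExtension_of_measurableSet hℋ hA hρA hρAc hg hh hgh hH]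

end MeasureTheory

theorem total_odds_extension_exists_general
    {Ω : Type*} {𝒜 ℋ : MeasurableSpace Ω} (hℋ : ℋ ≤ 𝒜)
    (P₀ : @Measure Ω 𝒜) [IsProbabilityMeasure P₀]
    (P₁ : @Measure Ω ℋ) [IsProbabilityMeasure P₁] (habs : P₁ ≪ P₀.trim hℋ)
    (A : Set Ω) (hA : MeasurableSet[𝒜] A)
    (p₀ : ℝ) (hp₀0 : 0 < p₀) (hp₀1 : p₀ < 1)
    (μ : @Measure Ω ℋ)
    (fA fAc : Ω → ℝ)
    (hfA_meas : @Measurable Ω ℝ ℋ _ fA) (hfAc_meas : @Measurable Ω ℝ ℋ _ fAc)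
    (hfA_int : Integrable fA μ) (hfAc_int : Integrable fAc μ)
    (hfA_pos : ∀ᵐ ω ∂μ, 0 < fA ω) (hfAc_pos : ∀ᵐ ω ∂μ, 0 < fAc ω)
    (hdensA : ∀ H : Set Ω, MeasurableSet[ℋ] H →
      (P₀ (H ∩ A)).toReal = p₀ * ∫ ω in H, fA ω ∂μ)
    (hdensAc : ∀ H : Set Ω, MeasurableSet[ℋ] H →
      (P₀ (H ∩ Aᶜ)).toReal = (1 - p₀) * ∫ ω in H, fAc ω ∂μ)
    (p₁ : ℝ) (hp₁ : p₁ ∈ Set.Ioo (0:ℝ) 1) :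
    ∃ P₁star : @Measure Ω (ℋ ⊔ MeasurableSpace.generateFrom {A}),
      IsProbabilityMeasure P₁star ∧
      (∀ H G : Set Ω, MeasurableSet[ℋ] H → MeasurableSet[ℋ] G →
        (P₁star ((A ∩ H) ∪ (Aᶜ ∩ G))).toReal =
          (∫ ω, H.indicator (fun _ => (1:ℝ)) ω *
              (p₁ / (p₁ + (1 - p₁) * (fAc ω / fA ω))) ∂P₁) +
          (∫ ω, G.indicator (fun _ => (1:ℝ)) ω *
              ((1 - p₁) * (fAc ω / fA ω) / (p₁ + (1 - p₁) * (fAc ω / fA ω))) ∂P₁)) ∧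
      (∀ H : Set Ω, MeasurableSet[ℋ] H → P₁star H = P₁ H) := by
  obtain ⟨hp₁0, hp₁1⟩ := hp₁
  obtain ⟨hμA, hAμ⟩ := trim_restrict_mutually_absolutelyContinuous_of_density hℋ hp₀0
    hfA_meas hfA_int hfA_pos hdensA
  obtain ⟨hμAc, hAcμ⟩ := trim_restrict_mutually_absolutelyContinuous_of_density hℋ
    (sub_pos.2 hp₀1) hfAc_meas hfAc_int hfAc_pos hdensAc
  have hP₁μ : P₁ ≪ μ := habs.trans (trim_absolutelyContinuous_of_restrict_compl hℋ hA hAμ hAcμ)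
  have hlam_nonneg : ∀ᵐ ω ∂P₁, 0 ≤ fAc ω / fA ω := hP₁μ.ae_le <| by
    filter_upwards [hfA_pos, hfAc_pos] with ω hfA hfAc
    positivity
  have hp₁1' : 0 < 1 - p₁ := sub_pos.2 hp₁1
  have hw_meas : Measurable[ℋ] fun ω => p₁ / (p₁ + (1 - p₁) * (fAc ω / fA ω)) := by fun_prop
  have hw'_meas : Measurable[ℋ] fun ω =>
      (1 - p₁) * (fAc ω / fA ω) / (p₁ + (1 - p₁) * (fAc ω / fA ω)) := by fun_prop
  obtain ⟨Q, hQ, hQ_union, hQ_restrict⟩ := exists_measure_sup_generateFrom_singleton hℋ hA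
    (hP₁μ.trans hμA) (hP₁μ.trans hμAc) hw_meas.ennreal_ofReal hw'_meas.ennreal_ofReal <|
      hlam_nonneg.mono fun ω h =>
        ENNReal.ofReal_div_add_ofReal_div_eq_one hp₁0.le (by positivity) (by positivity)
  refine ⟨Q, hQ, fun H G hH hG => ?_, hQ_restrict⟩
  have hfin := hQ_union H G hH hG ▸ measure_ne_top Q (A ∩ H ∪ Aᶜ ∩ G)
  rw [hQ_union H G hH hG, ENNReal.toReal_add (ENNReal.add_ne_top.1 hfin).1
      (ENNReal.add_ne_top.1 hfin).2,
    toReal_setLIntegral_ofReal hw_meas.aestronglyMeasurable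
      (hlam_nonneg.mono fun ω h => by positivity) hH,
    toReal_setLIntegral_ofReal hw'_meas.aestronglyMeasurable
      (hlam_nonneg.mono fun ω h => by positivity) hG]

/-- **Law of total odds, part (iii).** Suppose `P₁[λ₀ = 1] < 1` and
`p₁ ∈ (0,1)` solves `1 = E₁[1/(p₁ + (1−p₁)·λ₀)]`. Then the set function
`P₁*[(A ∩ H) ∪ (A^c ∩ G)] = E₁[1_H·p₁/(p₁+(1−p₁)λ₀)] + E₁[1_G·(1−p₁)λ₀/(p₁+(1−p₁)λ₀)]`
is well defined (independent of the representation), is a probability measure on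
`ℋ^A = σ(ℋ ∪ {A})`, and restricts to `P₁` on `ℋ`. -/
theorem total_odds_extension_exists
    {Ω : Type*} {𝒜 ℋ : MeasurableSpace Ω} (hℋ : ℋ ≤ 𝒜)
    (P₀ : @Measure Ω 𝒜) [IsProbabilityMeasure P₀]
    (P₁ : @Measure Ω ℋ) [IsProbabilityMeasure P₁] (habs : P₁ ≪ P₀.trim hℋ)
    (A : Set Ω) (hA : MeasurableSet[𝒜] A)
    (p₀ : ℝ) (hp₀ : p₀ = (P₀ A).toReal) (hp₀0 : 0 < p₀) (hp₀1 : p₀ < 1)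
    (μ : @Measure Ω ℋ) [SigmaFinite μ]
    (fA fAc : Ω → ℝ)
    (hfA_meas : @Measurable Ω ℝ ℋ _ fA) (hfAc_meas : @Measurable Ω ℝ ℋ _ fAc)
    (hfA_int : Integrable fA μ) (hfAc_int : Integrable fAc μ)
    (hfA_pos : ∀ᵐ ω ∂μ, 0 < fA ω) (hfAc_pos : ∀ᵐ ω ∂μ, 0 < fAc ω)
    (hdensA : ∀ H : Set Ω, MeasurableSet[ℋ] H →
      (P₀ (H ∩ A)).toReal = p₀ * ∫ ω in H, fA ω ∂μ)
    (hdensAc : ∀ H : Set Ω, MeasurableSet[ℋ] H →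
      (P₀ (H ∩ Aᶜ)).toReal = (1 - p₀) * ∫ ω in H, fAc ω ∂μ)
    (hlam : P₁ {ω | fAc ω / fA ω = 1} < 1)
    (p₁ : ℝ) (hp₁ : p₁ ∈ Set.Ioo (0:ℝ) 1)
    (heq : (1:ℝ) = ∫ ω, 1 / (p₁ + (1 - p₁) * (fAc ω / fA ω)) ∂P₁) :
    ∃ P₁star : @Measure Ω (ℋ ⊔ MeasurableSpace.generateFrom {A}),
      IsProbabilityMeasure P₁star ∧
      (∀ H G : Set Ω, MeasurableSet[ℋ] H → MeasurableSet[ℋ] G →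
        (P₁star ((A ∩ H) ∪ (Aᶜ ∩ G))).toReal =
          (∫ ω, H.indicator (fun _ => (1:ℝ)) ω *
              (p₁ / (p₁ + (1 - p₁) * (fAc ω / fA ω))) ∂P₁) +
          (∫ ω, G.indicator (fun _ => (1:ℝ)) ω *
              ((1 - p₁) * (fAc ω / fA ω) / (p₁ + (1 - p₁) * (fAc ω / fA ω))) ∂P₁)) ∧
      (∀ H : Set Ω, MeasurableSet[ℋ] H → P₁star H = P₁ H) :=
  total_odds_extension_exists_general hℋ P₀ P₁ habs A hA p₀ hp₀0 hp₀1 μ fA fAc hfA_meas hfAc_meas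
    hfA_int hfAc_int hfA_pos hfAc_pos hdensA hdensAc p₁ hp₁
end

section
/- Suppose P₁[λ₀ = 1] < 1 and p₁ ∈ (0,1) solves 1 = E₁[1/(p₁ + (1−p₁)·λ₀)], and let P₁* be the probability measure on ℋ^A given by P₁*[(A ∩ H) ∪ (A^c ∩ G)] = E₁[1_H · p₁/(p₁ + (1−p₁)λ₀)] + E₁[1_G · (1−p₁)λ₀/(p₁ + (1−p₁)λ₀)] for H, G ∈ ℋ. Then the ℋ-conditional probability of A under P₁* satisfies P₁*[A|ℋ] = p₁/(p₁ + (1−p₁)·λ₀) P₁*-almost surely; in particular P₁*[A] = p₁. -/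
open MeasureTheory Set

/-!
On `ℋ` the measure `P₁*` has density `g + h = D / D = 1_{D ≠ 0}` with respect to `P₁`, where
`D = p₁ + (1 - p₁) λ₀`, `g = p₁ / D` and `h = (1 - p₁) λ₀ / D`. Since `P₁*` has mass one, `D ≠ 0`
holds `P₁`-a.s., so `P₁*` and `P₁` agree on `ℋ`. Then `P₁*[A ∩ H] = E₁[1_H g] = E*[1_H g]` for
`H ∈ ℋ`, which identifies `g` as `P₁*[A|ℋ]`; taking `H = Ω` gives `P₁*[A] = p₁ E₁[1/D] = p₁`.
-/

theorem indicator_ne_zero_eq_div_self {Ω : Type*} (f : Ω → ℝ) :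
    {ω | f ω ≠ 0}.indicator 1 = fun ω => f ω / f ω := by
  ext ω
  by_cases hω : f ω = 0 <;> simp [hω]

theorem integral_indicator_one_mul {Ω : Type*} {m : MeasurableSpace Ω} {μ : Measure[m] Ω}
    {s : Set Ω} (hs : MeasurableSet[m] s) (φ : Ω → ℝ) :
    ∫ ω, s.indicator (fun _ => (1 : ℝ)) ω * φ ω ∂μ = ∫ ω in s, φ ω ∂μ := by
  simp_rw [← indicator_mul_left, one_mul]
  exact integral_indicator hs

section Odds

variable {Ω : Type*} [MeasurableSpace Ω] {P : Measure Ω} {f : Ω → ℝ} {a : ℝ} {b : Ω → ℝ}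

theorem integrable_div_self [IsFiniteMeasure P] (hf : Measurable f) :
    Integrable (fun ω => f ω / f ω) P := by
  rw [← indicator_ne_zero_eq_div_self]
  exact (integrable_const 1).indicator ((measurableSet_singleton 0).compl.preimage hf)

theorem ae_ne_zero_of_integral_div_self_eq_one [IsProbabilityMeasure P] (hf : Measurable f)
    (h : ∫ ω, f ω / f ω ∂P = 1) : ∀ᵐ ω ∂P, f ω ≠ 0 := by
  have hmeas : MeasurableSet {ω | f ω ≠ 0} := (measurableSet_singleton 0).compl.preimage hf
  rw [← indicator_ne_zero_eq_div_self, integral_indicator_one hmeas,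
    ← probReal_univ (μ := P), measureReal_eq_measureReal_iff, measure_univ] at h
  exact (prob_compl_eq_zero_iff hmeas).mpr h

theorem integrable_div_add_of_integrable_div_add [IsFiniteMeasure P] (hb : Measurable b)
    (hg : Integrable (fun ω => a / (a + b ω)) P) : Integrable (fun ω => b ω / (a + b ω)) P :=
  ((integrable_div_self (f := fun ω => a + b ω) (measurable_const.add hb)).sub hg).congr
    (ae_of_all _ fun ω => by simp only [Pi.sub_apply, add_div, add_sub_cancel_left])

theorem ae_add_ne_zero_of_measureReal_eq {Ω' : Type*} {m' : MeasurableSpace Ω'}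
    {Q : Measure[m'] Ω'} [IsProbabilityMeasure Q] [IsProbabilityMeasure P] {A : Set Ω'}
    (hA : MeasurableSet[m'] A)
    (hb : Measurable b) (hg : Integrable (fun ω => a / (a + b ω)) P)
    (hQA : Q.real A = ∫ ω, a / (a + b ω) ∂P) (hQAc : Q.real Aᶜ = ∫ ω, b ω / (a + b ω) ∂P) :
    ∀ᵐ ω ∂P, a + b ω ≠ 0 := by
  refine ae_ne_zero_of_integral_div_self_eq_one (f := fun ω => a + b ω)
    (measurable_const.add hb) ?_
  simp_rw [add_div]
  rw [integral_add hg (integrable_div_add_of_integrable_div_add hb hg), ← hQA, ← hQAc,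
    measureReal_add_measureReal_compl hA, probReal_univ]

end Odds

section Trim

variable {Ω : Type*} {m m₀ : MeasurableSpace Ω} (hm : m ≤ m₀) {A : Set Ω}

theorem measureReal_inter_eq_setIntegral {Q : Measure[m₀] Ω} {P : Measure[m] Ω} {g h : Ω → ℝ}
    (hQ : ∀ H G : Set Ω, MeasurableSet[m] H → MeasurableSet[m] G →
      Q.real ((A ∩ H) ∪ (Aᶜ ∩ G)) = ∫ ω, H.indicator (fun _ => (1 : ℝ)) ω * g ω ∂P +
        ∫ ω, G.indicator (fun _ => (1 : ℝ)) ω * h ω ∂P)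
    {s : Set Ω} (hs : MeasurableSet[m] s) :
    Q.real (A ∩ s) = ∫ ω in s, g ω ∂P ∧ Q.real (Aᶜ ∩ s) = ∫ ω in s, h ω ∂P := by
  have hA := hQ s ∅ hs (@MeasurableSet.empty _ m)
  have hAc := hQ ∅ s (@MeasurableSet.empty _ m) hs
  simp only [inter_empty, union_empty, empty_union, integral_indicator_one_mul hs,
    integral_indicator_one_mul (@MeasurableSet.empty _ m), Measure.restrict_empty, integral_zero_measure, add_zero,
    zero_add] at hA hAc
  exact ⟨hA, hAc⟩

theorem trim_eq_of_measureReal_inter_eq {Q : Measure[m₀] Ω} [IsFiniteMeasure Q]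
    {P : Measure[m] Ω} [IsFiniteMeasure P] (hA : MeasurableSet[m₀] A) {g h : Ω → ℝ}
    (hg : Integrable g P) (hh : Integrable h P) (hgh : ∀ᵐ ω ∂P, g ω + h ω = 1)
    (hQA : ∀ s, MeasurableSet[m] s → Q.real (A ∩ s) = ∫ ω in s, g ω ∂P)
    (hQAc : ∀ s, MeasurableSet[m] s → Q.real (Aᶜ ∩ s) = ∫ ω in s, h ω ∂P) :
    Q.trim hm = P := by
  refine @Measure.ext _ m _ _ fun s hs => ?_
  rw [trim_measurableSet_eq hm hs, ← measureReal_eq_measureReal_iff]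
  calc Q.real s = Q.real (A ∩ s) + Q.real (Aᶜ ∩ s) := by
        rw [← measureReal_union (disjoint_compl_right.mono inter_subset_left inter_subset_left)
          (hA.compl.inter (hm s hs)), ← union_inter_distrib_right, union_compl_self, univ_inter]
    _ = ∫ ω in s, (g ω + h ω) ∂P := by
        rw [hQA s hs, hQAc s hs, integral_add hg.integrableOn hh.integrableOn]
    _ = P.real s := by
        rw [setIntegral_congr_ae hs (hgh.mono fun ω hω _ => hω), setIntegral_const, smul_eq_mul,
          mul_one]

theorem condExp_indicator_ae_eq_of_trim_eq {Q : Measure[m₀] Ω} [IsFiniteMeasure Q]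
    {P : Measure[m] Ω} (hQP : Q.trim hm = P) (hA : MeasurableSet[m₀] A) {g : Ω → ℝ}
    (hg_meas : StronglyMeasurable[m] g) (hg : Integrable g P)
    (hQA : ∀ s, MeasurableSet[m] s → Q.real (A ∩ s) = ∫ ω in s, g ω ∂P) :
    Q[A.indicator fun _ => (1 : ℝ) | m] =ᵐ[Q] g := by
  refine (ae_eq_condExp_of_forall_setIntegral_eq hm ((integrable_const 1).indicator hA)
    (fun s _ _ => (integrable_of_integrable_trim hm (hQP ▸ hg)).integrableOn) (fun s hs _ => ?_)
    hg_meas.aestronglyMeasurable).symm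
  rw [setIntegral_trim hm hg_meas hs, hQP, ← hQA s hs, integral_indicator hA,
    Measure.restrict_restrict hA, setIntegral_const, smul_eq_mul, mul_one]

end Trim

theorem total_odds_condexp_general
    {Ω : Type*} {ℋ : MeasurableSpace Ω}
    (P₁ : @Measure Ω ℋ) [IsProbabilityMeasure P₁]
    (A : Set Ω)
    (fA fAc : Ω → ℝ)
    (hfA_meas : @Measurable Ω ℝ ℋ _ fA) (hfAc_meas : @Measurable Ω ℝ ℋ _ fAc)
    (p₁ : ℝ)
    (heq : (1:ℝ) = ∫ ω, 1 / (p₁ + (1 - p₁) * (fAc ω / fA ω)) ∂P₁)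
    (P₁star : @Measure Ω (ℋ ⊔ MeasurableSpace.generateFrom {A}))
    [IsProbabilityMeasure P₁star]
    (hstar : ∀ H G : Set Ω, MeasurableSet[ℋ] H → MeasurableSet[ℋ] G →
      (P₁star ((A ∩ H) ∪ (Aᶜ ∩ G))).toReal =
        (∫ ω, H.indicator (fun _ => (1:ℝ)) ω *
            (p₁ / (p₁ + (1 - p₁) * (fAc ω / fA ω))) ∂P₁) +
        (∫ ω, G.indicator (fun _ => (1:ℝ)) ω *
            ((1 - p₁) * (fAc ω / fA ω) / (p₁ + (1 - p₁) * (fAc ω / fA ω))) ∂P₁)) :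
    (condExp ℋ P₁star (A.indicator fun _ => (1:ℝ))
      =ᵐ[P₁star] fun ω => p₁ / (p₁ + (1 - p₁) * (fAc ω / fA ω))) ∧
    (P₁star A).toReal = p₁ := by
  set b : Ω → ℝ := fun ω => (1 - p₁) * (fAc ω / fA ω)
  have hb : Measurable[ℋ] b := measurable_const.mul (hfAc_meas.div hfA_meas)
  have hle : ℋ ≤ ℋ ⊔ MeasurableSpace.generateFrom {A} := le_sup_left
  have hA : MeasurableSet[ℋ ⊔ MeasurableSpace.generateFrom {A}] A :=
    le_sup_right (α := MeasurableSpace Ω) _ (MeasurableSpace.measurableSet_generateFrom rfl)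
  have hQ : ∀ s, MeasurableSet[ℋ] s →
      P₁star.real (A ∩ s) = ∫ ω in s, p₁ / (p₁ + b ω) ∂P₁ ∧
        P₁star.real (Aᶜ ∩ s) = ∫ ω in s, b ω / (p₁ + b ω) ∂P₁ :=
    fun s hs => measureReal_inter_eq_setIntegral (g := fun ω => p₁ / (p₁ + b ω))
      (h := fun ω => b ω / (p₁ + b ω)) hstar hs
  -- `heq` forces integrability: a non-integrable function has Bochner integral `0`.
  have hg : Integrable (fun ω => p₁ / (p₁ + b ω)) P₁ := by
    simp_rw [div_eq_mul_one_div p₁]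
    exact (Integrable.of_integral_ne_zero (heq ▸ one_ne_zero)).const_mul p₁
  have hD : ∀ᵐ ω ∂P₁, p₁ + b ω ≠ 0 :=
    ae_add_ne_zero_of_measureReal_eq hA hb hg (by simpa using (hQ univ .univ).1)
      (by simpa using (hQ univ .univ).2)
  have htrim : P₁star.trim hle = P₁ :=
    trim_eq_of_measureReal_inter_eq hle hA hg (integrable_div_add_of_integrable_div_add hb hg)
      (hD.mono fun ω hω => by rw [← add_div, div_self hω]) (fun s hs => (hQ s hs).1)
      (fun s hs => (hQ s hs).2)
  refine ⟨condExp_indicator_ae_eq_of_trim_eq hle htrim hA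
    (measurable_const.div (measurable_const.add hb)).stronglyMeasurable hg
    (fun s hs => (hQ s hs).1), ?_⟩
  calc P₁star.real A = ∫ ω, p₁ / (p₁ + b ω) ∂P₁ := by simpa using (hQ univ .univ).1
    _ = p₁ := by
        simp_rw [div_eq_mul_one_div p₁]
        rw [integral_const_mul, ← heq, mul_one]

/-- **Law of total odds, part (iv).** Suppose `P₁[λ₀ = 1] < 1` and
`p₁ ∈ (0,1)` solves `1 = E₁[1/(p₁ + (1−p₁)·λ₀)]`, and let `P₁*` be the probability
measure on `ℋ^A` given by the total-odds formula. Then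
`P₁*[A|ℋ] = p₁/(p₁ + (1−p₁)·λ₀)` `P₁*`-almost surely; in particular `P₁*[A] = p₁`. -/
theorem total_odds_condexp
    {Ω : Type*} {𝒜 ℋ : MeasurableSpace Ω} (hℋ : ℋ ≤ 𝒜)
    (P₀ : @Measure Ω 𝒜) [IsProbabilityMeasure P₀]
    (P₁ : @Measure Ω ℋ) [IsProbabilityMeasure P₁] (habs : P₁ ≪ P₀.trim hℋ)
    (A : Set Ω) (hA : MeasurableSet[𝒜] A)
    (p₀ : ℝ) (hp₀ : p₀ = (P₀ A).toReal) (hp₀0 : 0 < p₀) (hp₀1 : p₀ < 1)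
    (μ : @Measure Ω ℋ) [SigmaFinite μ]
    (fA fAc : Ω → ℝ)
    (hfA_meas : @Measurable Ω ℝ ℋ _ fA) (hfAc_meas : @Measurable Ω ℝ ℋ _ fAc)
    (hfA_int : Integrable fA μ) (hfAc_int : Integrable fAc μ)
    (hfA_pos : ∀ᵐ ω ∂μ, 0 < fA ω) (hfAc_pos : ∀ᵐ ω ∂μ, 0 < fAc ω)
    (hdensA : ∀ H : Set Ω, MeasurableSet[ℋ] H →
      (P₀ (H ∩ A)).toReal = p₀ * ∫ ω in H, fA ω ∂μ)
    (hdensAc : ∀ H : Set Ω, MeasurableSet[ℋ] H →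
      (P₀ (H ∩ Aᶜ)).toReal = (1 - p₀) * ∫ ω in H, fAc ω ∂μ)
    (hlam : P₁ {ω | fAc ω / fA ω = 1} < 1)
    (p₁ : ℝ) (hp₁ : p₁ ∈ Set.Ioo (0:ℝ) 1)
    (heq : (1:ℝ) = ∫ ω, 1 / (p₁ + (1 - p₁) * (fAc ω / fA ω)) ∂P₁)
    (P₁star : @Measure Ω (ℋ ⊔ MeasurableSpace.generateFrom {A}))
    [IsProbabilityMeasure P₁star]
    (hstar : ∀ H G : Set Ω, MeasurableSet[ℋ] H → MeasurableSet[ℋ] G →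
      (P₁star ((A ∩ H) ∪ (Aᶜ ∩ G))).toReal =
        (∫ ω, H.indicator (fun _ => (1:ℝ)) ω *
            (p₁ / (p₁ + (1 - p₁) * (fAc ω / fA ω))) ∂P₁) +
        (∫ ω, G.indicator (fun _ => (1:ℝ)) ω *
            ((1 - p₁) * (fAc ω / fA ω) / (p₁ + (1 - p₁) * (fAc ω / fA ω))) ∂P₁)) :
    (condExp ℋ P₁star (A.indicator fun _ => (1:ℝ))
      =ᵐ[P₁star] fun ω => p₁ / (p₁ + (1 - p₁) * (fAc ω / fA ω))) ∧
    (P₁star A).toReal = p₁ :=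
  total_odds_condexp_general P₁ A fA fAc hfA_meas hfAc_meas p₁ heq P₁star hstar
end

section
/- Suppose P₁[λ₀ = 1] < 1 and p₁ ∈ (0,1) solves 1 = E₁[1/(p₁ + (1−p₁)·λ₀)], and let P₁* be the associated probability measure on ℋ^A. If P̃₁ is any probability measure on ℋ^A with P̃₁[A] ∈ (0,1), whose restriction to ℋ equals P₁, and which satisfies (P̃₁[A^c|ℋ]/P̃₁[A|ℋ])·(P̃₁[A]/P̃₁[A^c]) = λ₀ almost surely, then P̃₁ = P₁*. -/
/-!
On `ℋ ⊔ σ(A)` every event is `(A ∩ H) ∪ (Aᶜ ∩ G)` with `H, G ∈ ℋ`, so a measure there is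
determined by its restriction to `ℋ` together with the conditional probability
`g = P̃[A | ℋ]`. The odds hypothesis says `(1 - g) / g · c / (1 - c) = λ₀` with
`c = P̃[A]`, which Bayes' formula solves as `g = c / (c + (1 - c) λ₀)`. Integrating over `Ω`
shows that `c` is a root of the total-odds equation `E₁[1 / (c + (1 - c) λ₀)] = 1`, and that
root is unique in `(0, 1)` unless `λ₀ = 1` a.s.; hence `c = p₁` and `P̃₁` has the defining
values of `P₁*`.
-/

open MeasureTheory Set

lemma add_one_sub_mul_pos_s9 {p l : ℝ} (hp : p ∈ Ioo (0 : ℝ) 1) (hl : 0 < l) :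
    0 < p + (1 - p) * l := by
  have := hp.1
  have := hp.2
  positivity

lemma one_div_sub_one_div_one_sub {r l : ℝ} (hr : r ≠ 1) (hD : r + (1 - r) * l ≠ 0) :
    (1 / (r + (1 - r) * l) - 1) / (1 - r) = (1 - l) / (r + (1 - r) * l) := by
  rw [div_eq_div_iff (sub_ne_zero.2 hr.symm) hD]
  field_simp
  ring

lemma eq_div_of_odds_eq {g c l : ℝ} (hc : c ∈ Ioo (0 : ℝ) 1) (hl : 0 < l)
    (h : (1 - g) / g * (c / (1 - c)) = l) : g = c / (c + (1 - c) * l) := by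
  have hg : g ≠ 0 := by
    rintro rfl
    rw [div_zero, zero_mul] at h
    exact hl.ne h
  have hc1 : 1 - c ≠ 0 := sub_ne_zero.2 hc.2.ne'
  rw [eq_div_iff (add_one_sub_mul_pos_s9 hc hl).ne', ← h]
  field_simp
  ring

namespace MeasureTheory

variable {Ω : Type*}

section JoinWithEvent

variable {m : MeasurableSpace Ω} {A : Set Ω}

lemma exists_eq_inter_union_compl_inter_of_measurableSet_sup {s : Set Ω}
    (hs : MeasurableSet[m ⊔ MeasurableSpace.generateFrom {A}] s) :
    ∃ H G, MeasurableSet[m] H ∧ MeasurableSet[m] G ∧ s = (A ∩ H) ∪ (Aᶜ ∩ G) := by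
  let split : MeasurableSpace Ω :=
    { MeasurableSet' := fun s => ∃ H G, MeasurableSet[m] H ∧ MeasurableSet[m] G ∧
        s = (A ∩ H) ∪ (Aᶜ ∩ G)
      measurableSet_empty := ⟨∅, ∅, .empty, .empty, by simp⟩
      measurableSet_compl := by
        rintro _ ⟨H, G, hH, hG, rfl⟩
        refine ⟨Hᶜ, Gᶜ, hH.compl, hG.compl, ?_⟩
        ext ω; by_cases hω : ω ∈ A <;> simp [hω]
      measurableSet_iUnion := by
        intro f hf
        choose H G hH hG hf using hf
        refine ⟨⋃ n, H n, ⋃ n, G n, .iUnion hH, .iUnion hG, ?_⟩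
        simp_rw [hf]; ext ω; by_cases hω : ω ∈ A <;> simp [hω] }
  have hle : m ⊔ MeasurableSpace.generateFrom {A} ≤ split := by
    refine sup_le (fun t ht => ⟨t, t, ht, ht, by simp [← union_inter_distrib_right]⟩) ?_
    refine MeasurableSpace.generateFrom_le ?_
    rintro t (rfl : t = A)
    exact ⟨univ, ∅, @MeasurableSet.univ Ω m, @MeasurableSet.empty Ω m, by simp⟩
  exact hle s hs

lemma ext_of_inter_union_compl_inter {ν ν' : @Measure Ω (m ⊔ MeasurableSpace.generateFrom {A})}
    (h : ∀ H G, MeasurableSet[m] H → MeasurableSet[m] G →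
      ν ((A ∩ H) ∪ (Aᶜ ∩ G)) = ν' ((A ∩ H) ∪ (Aᶜ ∩ G))) :
    ν = ν' := by
  refine @Measure.ext Ω (m ⊔ MeasurableSpace.generateFrom {A}) ν ν' fun s hs => ?_
  obtain ⟨H, G, hH, hG, rfl⟩ := exists_eq_inter_union_compl_inter_of_measurableSet_sup hs
  exact h H G hH hG

end JoinWithEvent

lemma trim_absolutelyContinuous_of_setIntegral {m m0 : MeasurableSpace Ω} (hm : m ≤ m0)
    {P : @Measure Ω m0} [IsFiniteMeasure P] {μ : @Measure Ω m} {A : Set Ω} {a b : ℝ}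
    {f g : Ω → ℝ}
    (hf : ∀ H, MeasurableSet[m] H → (P (H ∩ A)).toReal = a * ∫ ω in H, f ω ∂μ)
    (hg : ∀ H, MeasurableSet[m] H → (P (H ∩ Aᶜ)).toReal = b * ∫ ω in H, g ω ∂μ) :
    P.trim hm ≪ μ := by
  refine Measure.AbsolutelyContinuous.mk fun H hH hμH => ?_
  have hA : P (H ∩ A) = 0 := by
    rw [← measureReal_eq_zero_iff, measureReal_def, hf H hH, setIntegral_measure_zero _ hμH,
      mul_zero]
  have hAc : P (H ∩ Aᶜ) = 0 := by
    rw [← measureReal_eq_zero_iff, measureReal_def, hg H hH, setIntegral_measure_zero _ hμH,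
      mul_zero]
  rw [trim_measurableSet_eq hm hH, ← inter_union_compl H A]
  exact measure_union_null hA hAc

section TotalOddsEquation

variable [MeasurableSpace Ω] {P : Measure Ω} [IsProbabilityMeasure P] {l : Ω → ℝ}

lemma integrable_one_div_add_one_sub_mul (hl : AEMeasurable l P) (hpos : ∀ᵐ ω ∂P, 0 < l ω)
    {p : ℝ} (hp : p ∈ Ioo (0 : ℝ) 1) :
    Integrable (fun ω => 1 / (p + (1 - p) * l ω)) P := by
  refine .mono' (integrable_const (1 / p))
    ((aemeasurable_const.add (aemeasurable_const.mul hl)).const_div 1).aestronglyMeasurable ?_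
  filter_upwards [hpos] with ω hω
  have hD : p ≤ p + (1 - p) * l ω := le_add_of_nonneg_right (by nlinarith [hp.2])
  rw [Real.norm_of_nonneg (one_div_pos.2 (add_one_sub_mul_pos_s9 hp hω)).le]
  exact one_div_le_one_div_of_le hp.1 hD

/-- Each root `p` of the total-odds equation makes `(1 - l) / (p + (1 - p) l)` centred, and
these functions decrease in `p`, strictly where `l ≠ 1`. -/
lemma ae_eq_one_of_integral_one_div_eq_one (hl : AEMeasurable l P) (hpos : ∀ᵐ ω ∂P, 0 < l ω)
    {p q : ℝ} (hp : p ∈ Ioo (0 : ℝ) 1) (hq : q ∈ Ioo (0 : ℝ) 1) (hpq : p < q)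
    (hp_root : ∫ ω, 1 / (p + (1 - p) * l ω) ∂P = 1)
    (hq_root : ∫ ω, 1 / (q + (1 - q) * l ω) ∂P = 1) :
    ∀ᵐ ω ∂P, l ω = 1 := by
  set φ : ℝ → Ω → ℝ := fun r ω => (1 - l ω) / (r + (1 - r) * l ω)
  have hφ_eq (r : ℝ) (hr : r ∈ Ioo (0 : ℝ) 1) :
      (fun ω => (1 / (r + (1 - r) * l ω) - 1) / (1 - r)) =ᵐ[P] φ r := by
    filter_upwards [hpos] with ω hω
    exact one_div_sub_one_div_one_sub hr.2.ne (add_one_sub_mul_pos_s9 hr hω).ne'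
  have hφ_int (r : ℝ) (hr : r ∈ Ioo (0 : ℝ) 1) : Integrable (φ r) P :=
    (((integrable_one_div_add_one_sub_mul hl hpos hr).sub (integrable_const 1)).div_const _).congr
      (hφ_eq r hr)
  have hφ_integral (r : ℝ) (hr : r ∈ Ioo (0 : ℝ) 1)
      (hr_root : ∫ ω, 1 / (r + (1 - r) * l ω) ∂P = 1) : ∫ ω, φ r ω ∂P = 0 := by
    rw [← integral_congr_ae (hφ_eq r hr), integral_div,
      integral_sub (integrable_one_div_add_one_sub_mul hl hpos hr) (integrable_const 1), hr_root,
      integral_const, probReal_univ, one_smul, sub_self, zero_div]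
  have hdiff : ∀ᵐ ω ∂P, φ p ω - φ q ω =
      (q - p) * (1 - l ω) ^ 2 / ((p + (1 - p) * l ω) * (q + (1 - q) * l ω)) := by
    filter_upwards [hpos] with ω hω
    rw [div_sub_div _ _ (add_one_sub_mul_pos_s9 hp hω).ne' (add_one_sub_mul_pos_s9 hq hω).ne']
    ring
  have hdiff_nonneg : 0 ≤ᵐ[P] fun ω => φ p ω - φ q ω := by
    filter_upwards [hpos, hdiff] with ω hω hω_diff
    rw [Pi.zero_apply, hω_diff]
    have := add_one_sub_mul_pos_s9 hp hω
    have := add_one_sub_mul_pos_s9 hq hω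
    have := sub_pos.2 hpq
    positivity
  have hdiff_zero : (fun ω => φ p ω - φ q ω) =ᵐ[P] 0 := by
    rw [← integral_eq_zero_iff_of_nonneg_ae hdiff_nonneg ((hφ_int p hp).sub (hφ_int q hq)),
      integral_sub (hφ_int p hp) (hφ_int q hq), hφ_integral p hp hp_root,
      hφ_integral q hq hq_root, sub_zero]
  filter_upwards [hpos, hdiff, hdiff_zero] with ω hω hω_diff hω_zero
  have hD := mul_pos (add_one_sub_mul_pos_s9 hp hω) (add_one_sub_mul_pos_s9 hq hω)
  rw [hω_zero, Pi.zero_apply, eq_comm, div_eq_zero_iff, or_iff_left hD.ne', mul_eq_zero,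
    or_iff_right (sub_pos.2 hpq).ne', pow_eq_zero_iff two_ne_zero, sub_eq_zero] at hω_diff
  exact hω_diff.symm

lemma eq_of_integral_one_div_eq_one (hl : AEMeasurable l P) (hpos : ∀ᵐ ω ∂P, 0 < l ω)
    (hl_ne : ¬ ∀ᵐ ω ∂P, l ω = 1) {p q : ℝ} (hp : p ∈ Ioo (0 : ℝ) 1)
    (hq : q ∈ Ioo (0 : ℝ) 1)
    (hp_root : ∫ ω, 1 / (p + (1 - p) * l ω) ∂P = 1)
    (hq_root : ∫ ω, 1 / (q + (1 - q) * l ω) ∂P = 1) :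
    p = q := by
  rcases lt_trichotomy p q with hpq | hpq | hpq
  · exact (hl_ne (ae_eq_one_of_integral_one_div_eq_one hl hpos hp hq hpq hp_root hq_root)).elim
  · exact hpq
  · exact (hl_ne (ae_eq_one_of_integral_one_div_eq_one hl hpos hq hp hpq hq_root hp_root)).elim

end TotalOddsEquation

section ConditionalProbability

variable {m m0 : MeasurableSpace Ω} {ν : @Measure Ω m0} {A : Set Ω}

lemma measureReal_inter_eq_integral_indicator_mul_condExp (hm : m ≤ m0) [IsFiniteMeasure ν]
    (hA : MeasurableSet[m0] A) {H : Set Ω} (hH : MeasurableSet[m] H) :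
    ν.real (A ∩ H) = ∫ ω, H.indicator (fun _ => (1 : ℝ)) ω *
      ν[A.indicator fun _ => (1 : ℝ)|m] ω ∂ν.trim hm := by
  simp_rw [← indicator_mul_left, one_mul]
  rw [integral_indicator hH, ← setIntegral_trim hm stronglyMeasurable_condExp hH,
    setIntegral_condExp hm ((integrable_const 1).indicator hA) hH,
    setIntegral_indicator hA, setIntegral_const, smul_eq_mul, mul_one, inter_comm]

lemma condExp_indicator_compl_ae_eq (hm : m ≤ m0) [IsFiniteMeasure ν]
    (hA : MeasurableSet[m0] A) :
    ν[Aᶜ.indicator fun _ => (1 : ℝ)|m] =ᵐ[ν.trim hm]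
      fun ω => 1 - ν[A.indicator fun _ => (1 : ℝ)|m] ω := by
  have hAc : (Aᶜ.indicator fun _ => (1 : ℝ)) = (fun _ => 1) - A.indicator fun _ => 1 := by
    ext ω; by_cases hω : ω ∈ A <;> simp [hω]
  refine (stronglyMeasurable_condExp.ae_eq_trim_iff hm
    (stronglyMeasurable_const.sub stronglyMeasurable_condExp)).2 ?_
  rw [hAc]
  filter_upwards [condExp_sub (integrable_const (1 : ℝ)) ((integrable_const 1).indicator hA) m]
    with ω hω
  rw [hω, condExp_const hm]

lemma condExp_indicator_ae_eq_of_odds (hm : m ≤ m0) [IsProbabilityMeasure ν]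
    (hA : MeasurableSet[m0] A) (hA01 : ν.real A ∈ Ioo (0 : ℝ) 1) {l : Ω → ℝ}
    (hl : Measurable[m] l) (hpos : ∀ᵐ ω ∂ν, 0 < l ω)
    (hodds : ∀ᵐ ω ∂ν, ν[Aᶜ.indicator fun _ => (1 : ℝ)|m] ω /
      ν[A.indicator fun _ => (1 : ℝ)|m] ω * (ν.real A / ν.real Aᶜ) = l ω) :
    ν[A.indicator fun _ => (1 : ℝ)|m] =ᵐ[ν.trim hm]
      fun ω => ν.real A / (ν.real A + (1 - ν.real A) * l ω) := by
  refine (stronglyMeasurable_condExp.ae_eq_trim_iff hm ?_).2 ?_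
  · exact ((measurable_const.add (measurable_const.mul hl)).const_div _).stronglyMeasurable
  filter_upwards [hodds, hpos, ae_eq_of_ae_eq_trim (condExp_indicator_compl_ae_eq hm hA)]
    with ω hω_odds hω hω_compl
  rw [hω_compl, probReal_compl_eq_one_sub hA] at hω_odds
  exact eq_div_of_odds_eq hA01 hω hω_odds

lemma measureReal_inter_union_compl_inter (hm : m ≤ m0) [IsFiniteMeasure ν]
    (hA : MeasurableSet[m0] A) {H G : Set Ω} (hH : MeasurableSet[m] H)
    (hG : MeasurableSet[m] G) :
    ν.real ((A ∩ H) ∪ (Aᶜ ∩ G)) =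
      ∫ ω, H.indicator (fun _ => (1 : ℝ)) ω *
        ν[A.indicator fun _ => (1 : ℝ)|m] ω ∂ν.trim hm +
      ∫ ω, G.indicator (fun _ => (1 : ℝ)) ω *
        ν[Aᶜ.indicator fun _ => (1 : ℝ)|m] ω ∂ν.trim hm := by
  rw [measureReal_union (disjoint_compl_right.mono inter_subset_left inter_subset_left)
      (hA.compl.inter (hm _ hG)),
    measureReal_inter_eq_integral_indicator_mul_condExp hm hA hH,
    measureReal_inter_eq_integral_indicator_mul_condExp hm hA.compl hG]

lemma integral_one_div_eq_one_of_condExp_ae_eq (hm : m ≤ m0) [IsProbabilityMeasure ν]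
    (hA : MeasurableSet[m0] A) (hA0 : 0 < ν.real A) {l : Ω → ℝ}
    (hcond : ν[A.indicator fun _ => (1 : ℝ)|m] =ᵐ[ν.trim hm]
      fun ω => ν.real A / (ν.real A + (1 - ν.real A) * l ω)) :
    ∫ ω, 1 / (ν.real A + (1 - ν.real A) * l ω) ∂ν.trim hm = 1 := by
  have h : ν.real A = ∫ ω, ν[A.indicator fun _ => (1 : ℝ)|m] ω ∂ν.trim hm := by
    rw [← integral_trim hm stronglyMeasurable_condExp, integral_condExp hm]
    exact (integral_indicator_one hA).symm
  simp_rw [integral_congr_ae hcond, div_eq_mul_one_div (ν.real A), integral_const_mul] at h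
  exact mul_left_cancel₀ hA0.ne' (h.symm.trans (mul_one _).symm)

end ConditionalProbability

end MeasureTheory

theorem total_odds_extension_unique_general
    {Ω : Type*} {𝒜 ℋ : MeasurableSpace Ω} (hℋ : ℋ ≤ 𝒜)
    (P₀ : @Measure Ω 𝒜) [IsProbabilityMeasure P₀]
    (P₁ : @Measure Ω ℋ) [IsProbabilityMeasure P₁] (habs : P₁ ≪ P₀.trim hℋ)
    (A : Set Ω)
    (p₀ : ℝ)
    (μ : @Measure Ω ℋ)
    (fA fAc : Ω → ℝ)
    (hfA_meas : @Measurable Ω ℝ ℋ _ fA) (hfAc_meas : @Measurable Ω ℝ ℋ _ fAc)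
    (hfA_pos : ∀ᵐ ω ∂μ, 0 < fA ω) (hfAc_pos : ∀ᵐ ω ∂μ, 0 < fAc ω)
    (hdensA : ∀ H : Set Ω, MeasurableSet[ℋ] H →
      (P₀ (H ∩ A)).toReal = p₀ * ∫ ω in H, fA ω ∂μ)
    (hdensAc : ∀ H : Set Ω, MeasurableSet[ℋ] H →
      (P₀ (H ∩ Aᶜ)).toReal = (1 - p₀) * ∫ ω in H, fAc ω ∂μ)
    (hlam : P₁ {ω | fAc ω / fA ω = 1} < 1)
    (p₁ : ℝ) (hp₁ : p₁ ∈ Set.Ioo (0:ℝ) 1)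
    (heq : (1:ℝ) = ∫ ω, 1 / (p₁ + (1 - p₁) * (fAc ω / fA ω)) ∂P₁)
    (P₁star : @Measure Ω (ℋ ⊔ MeasurableSpace.generateFrom {A}))
    [IsProbabilityMeasure P₁star]
    (hstar : ∀ H G : Set Ω, MeasurableSet[ℋ] H → MeasurableSet[ℋ] G →
      (P₁star ((A ∩ H) ∪ (Aᶜ ∩ G))).toReal =
        (∫ ω, H.indicator (fun _ => (1:ℝ)) ω *
            (p₁ / (p₁ + (1 - p₁) * (fAc ω / fA ω))) ∂P₁) +
        (∫ ω, G.indicator (fun _ => (1:ℝ)) ω *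
            ((1 - p₁) * (fAc ω / fA ω) / (p₁ + (1 - p₁) * (fAc ω / fA ω))) ∂P₁))
    (Ptilde : @Measure Ω (ℋ ⊔ MeasurableSpace.generateFrom {A}))
    [IsProbabilityMeasure Ptilde]
    (htildeA : (Ptilde A).toReal ∈ Set.Ioo (0:ℝ) 1)
    (htilde_restr : ∀ H : Set Ω, MeasurableSet[ℋ] H → Ptilde H = P₁ H)
    (htilde_odds : ∀ᵐ ω ∂Ptilde,
      (condExp ℋ Ptilde (Aᶜ.indicator fun _ => (1:ℝ)) ω /
        condExp ℋ Ptilde (A.indicator fun _ => (1:ℝ)) ω) *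
        ((Ptilde A).toReal / (Ptilde Aᶜ).toReal) = fAc ω / fA ω) :
    Ptilde = P₁star := by
  have hm : ℋ ≤ ℋ ⊔ MeasurableSpace.generateFrom {A} := le_sup_left
  have hA : MeasurableSet[ℋ ⊔ MeasurableSpace.generateFrom {A}] A :=
    le_sup_right (a := ℋ) _ (MeasurableSpace.measurableSet_generateFrom rfl)
  have htrim : Ptilde.trim hm = P₁ :=
    Measure.ext fun H hH => (trim_measurableSet_eq hm hH).trans (htilde_restr H hH)
  have hl : Measurable[ℋ] fun ω => fAc ω / fA ω := hfAc_meas.div hfA_meas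
  have hl_pos : ∀ᵐ ω ∂P₁, 0 < fAc ω / fA ω :=
    (habs.trans (trim_absolutelyContinuous_of_setIntegral hℋ hdensA hdensAc)).ae_le
      ((hfA_pos.and hfAc_pos).mono fun ω h => div_pos h.2 h.1)
  have hl_ne : ¬ ∀ᵐ ω ∂P₁, fAc ω / fA ω = 1 := fun h => hlam.ne <|
    ((ae_iff_measure_eq (measurableSet_eq_fun hl measurable_const).nullMeasurableSet).1 h).trans
      measure_univ
  have hcond := condExp_indicator_ae_eq_of_odds hm hA htildeA hl
    (ae_of_ae_trim hm (htrim ▸ hl_pos)) htilde_odds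
  have hroot := integral_one_div_eq_one_of_condExp_ae_eq hm hA htildeA.1 hcond
  rw [htrim] at hroot hcond
  have hpt : Ptilde.real A = p₁ :=
    eq_of_integral_one_div_eq_one hl.aemeasurable hl_pos hl_ne htildeA hp₁ hroot heq.symm
  rw [hpt] at hcond
  refine ext_of_inter_union_compl_inter fun H G hH hG => ?_
  rw [← measureReal_eq_measureReal_iff, measureReal_def P₁star, hstar H G hH hG,
    measureReal_inter_union_compl_inter hm hA hH hG, htrim]
  congr 1 <;> refine integral_congr_ae (Filter.EventuallyEq.rfl.mul ?_)
  · exact hcond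
  · filter_upwards [htrim ▸ condExp_indicator_compl_ae_eq hm hA, hcond, hl_pos]
      with ω hω_compl hω hω_pos
    rw [hω_compl, hω, one_sub_div (add_one_sub_mul_pos_s9 hp₁ hω_pos).ne', add_sub_cancel_left]

/-- **uniqueness of the total-odds extension.** Suppose `P₁[λ₀ = 1] < 1`,
`p₁ ∈ (0,1)` solves the total-odds equation, and `P₁*` is the associated probability
measure on `ℋ^A`. If `P̃₁` is any probability measure on `ℋ^A` with `P̃₁[A] ∈ (0,1)`,
restricting to `P₁` on `ℋ`, whose relative odds of `A^c` equal `λ₀` a.s., then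
`P̃₁ = P₁*`. -/
theorem total_odds_extension_unique
    {Ω : Type*} {𝒜 ℋ : MeasurableSpace Ω} (hℋ : ℋ ≤ 𝒜)
    (P₀ : @Measure Ω 𝒜) [IsProbabilityMeasure P₀]
    (P₁ : @Measure Ω ℋ) [IsProbabilityMeasure P₁] (habs : P₁ ≪ P₀.trim hℋ)
    (A : Set Ω) (hA : MeasurableSet[𝒜] A)
    (p₀ : ℝ) (hp₀ : p₀ = (P₀ A).toReal) (hp₀0 : 0 < p₀) (hp₀1 : p₀ < 1)
    (μ : @Measure Ω ℋ) [SigmaFinite μ]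
    (fA fAc : Ω → ℝ)
    (hfA_meas : @Measurable Ω ℝ ℋ _ fA) (hfAc_meas : @Measurable Ω ℝ ℋ _ fAc)
    (hfA_int : Integrable fA μ) (hfAc_int : Integrable fAc μ)
    (hfA_pos : ∀ᵐ ω ∂μ, 0 < fA ω) (hfAc_pos : ∀ᵐ ω ∂μ, 0 < fAc ω)
    (hdensA : ∀ H : Set Ω, MeasurableSet[ℋ] H →
      (P₀ (H ∩ A)).toReal = p₀ * ∫ ω in H, fA ω ∂μ)
    (hdensAc : ∀ H : Set Ω, MeasurableSet[ℋ] H →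
      (P₀ (H ∩ Aᶜ)).toReal = (1 - p₀) * ∫ ω in H, fAc ω ∂μ)
    (hlam : P₁ {ω | fAc ω / fA ω = 1} < 1)
    (p₁ : ℝ) (hp₁ : p₁ ∈ Set.Ioo (0:ℝ) 1)
    (heq : (1:ℝ) = ∫ ω, 1 / (p₁ + (1 - p₁) * (fAc ω / fA ω)) ∂P₁)
    (P₁star : @Measure Ω (ℋ ⊔ MeasurableSpace.generateFrom {A}))
    [IsProbabilityMeasure P₁star]
    (hstar : ∀ H G : Set Ω, MeasurableSet[ℋ] H → MeasurableSet[ℋ] G →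
      (P₁star ((A ∩ H) ∪ (Aᶜ ∩ G))).toReal =
        (∫ ω, H.indicator (fun _ => (1:ℝ)) ω *
            (p₁ / (p₁ + (1 - p₁) * (fAc ω / fA ω))) ∂P₁) +
        (∫ ω, G.indicator (fun _ => (1:ℝ)) ω *
            ((1 - p₁) * (fAc ω / fA ω) / (p₁ + (1 - p₁) * (fAc ω / fA ω))) ∂P₁))
    (Ptilde : @Measure Ω (ℋ ⊔ MeasurableSpace.generateFrom {A}))
    [IsProbabilityMeasure Ptilde]
    (htildeA : (Ptilde A).toReal ∈ Set.Ioo (0:ℝ) 1)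
    (htilde_restr : ∀ H : Set Ω, MeasurableSet[ℋ] H → Ptilde H = P₁ H)
    (htilde_odds : ∀ᵐ ω ∂Ptilde,
      (condExp ℋ Ptilde (Aᶜ.indicator fun _ => (1:ℝ)) ω /
        condExp ℋ Ptilde (A.indicator fun _ => (1:ℝ)) ω) *
        ((Ptilde A).toReal / (Ptilde Aᶜ).toReal) = fAc ω / fA ω) :
    Ptilde = P₁star :=
  total_odds_extension_unique_general hℋ P₀ P₁ habs A p₀ μ fA fAc hfA_meas hfAc_meas hfA_pos
    hfAc_pos hdensA hdensAc hlam p₁ hp₁ heq P₁star hstar Ptilde htildeA htilde_restr htilde_odds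
end

section
/- Suppose P₀[λ₀ = 1] < 1 and let P₁ = Q, where Q is the mixture measure Q[H] = q·∫_H f_A dμ + (1−q)·∫_H f_{A^c} dμ on (Ω, ℋ) for a fixed q ∈ (0,1). Then p₁ = q is the unique solution in (0,1) of 1 = E₁[1/(p₁ + (1−p₁)·λ₀)], and the associated extension P₁* of P₁ to ℋ^A satisfies P₁*[A] = q. -/
/-!
Write `w_q = q f_A + (1 - q) f_{A^c}` for the μ-density of `Q` and `d_p = p f_A + (1 - p) f_{A^c}`,
so that `1 / (p + (1 - p) λ₀) = f_A / d_p`. Since `w_q - d_p = (q - p) (f_A - f_{A^c})` and both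
densities have total mass one,
`E_Q[f_A / d_p] = 1 + (1 - p) (q - p) ∫ (f_A - f_{A^c})² / d_p dμ`.
Hence `p = q` solves the equation, and any other root in `(0,1)` forces `f_A = f_{A^c}` μ-a.e.,
i.e. `λ₀ = 1` almost surely, which `P₀[λ₀ = 1] < 1` excludes. Taking `H = Ω`, `G = ∅` in the
definition of `P₁*` gives `P₁*[A] = q · E_Q[1 / (q + (1 - q) λ₀)] = q`.
-/

open MeasureTheory Set

section Mixture

variable {α : Type*} [MeasurableSpace α] {μ : Measure α} {a b : α → ℝ} {p : ℝ}

theorem integral_eq_integral_mul_of_toReal_apply_eq {ν : Measure α} [IsFiniteMeasure ν]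
    {w : α → ℝ} (hw : Integrable w μ) (hw0 : 0 ≤ᵐ[μ] w)
    (hν : ∀ s, MeasurableSet s → (ν s).toReal = ∫ x in s, w x ∂μ) (g : α → ℝ) :
    ∫ x, g x ∂ν = ∫ x, w x * g x ∂μ := by
  have hν_eq : ν = μ.withDensity fun x => ENNReal.ofReal (w x) := by
    ext s hs
    rw [withDensity_apply _ hs,
      ← ofReal_integral_eq_lintegral_ofReal hw.restrict (ae_restrict_of_ae hw0), ← hν s hs,
      ENNReal.ofReal_toReal (measure_ne_top ν s)]
  rw [hν_eq, integral_withDensity_eq_integral_toReal_smul₀ hw.aemeasurable.ennreal_ofReal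
    (ae_of_all _ fun _ => ENNReal.ofReal_lt_top)]
  refine integral_congr_ae ?_
  filter_upwards [hw0] with x hx
  simp [ENNReal.toReal_ofReal hx]

theorem mixture_pos {a b : ℝ} (ha : 0 < a) (hb : 0 < b) (hp : p ∈ Ioo 0 1) :
    0 < p * a + (1 - p) * b :=
  add_pos (mul_pos hp.1 ha) (mul_pos (sub_pos.2 hp.2) hb)

theorem mixture_mul_one_div_odds {a b q : ℝ} (ha : a ≠ 0) (hd : p * a + (1 - p) * b ≠ 0) :
    (q * a + (1 - q) * b) * (1 / (p + (1 - p) * (b / a))) =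
      q * a + (1 - q) * b + (1 - p) * (a - b) +
        (1 - p) * (q - p) * ((a - b) ^ 2 / (p * a + (1 - p) * b)) := by
  rw [show p + (1 - p) * (b / a) = (p * a + (1 - p) * b) / a by field_simp, one_div_div]
  -- otherwise `field_simp` rewrites the denominator into a form it cannot prove nonzero
  generalize hD : p * a + (1 - p) * b = D at hd ⊢
  field_simp
  rw [← hD]
  ring

theorem sq_sub_div_mixture_le {a b : ℝ} (ha : 0 < a) (hb : 0 < b) (hp : p ∈ Ioo 0 1) :
    (a - b) ^ 2 / (p * a + (1 - p) * b) ≤ (a + b) / min p (1 - p) := by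
  have hc : 0 < min p (1 - p) := lt_min hp.1 (sub_pos.2 hp.2)
  have hcd : min p (1 - p) * (a + b) ≤ p * a + (1 - p) * b := by
    nlinarith [min_le_left p (1 - p), min_le_right p (1 - p)]
  rw [div_le_div_iff₀ (mixture_pos ha hb hp) hc]
  nlinarith [mul_pos ha hb, mul_le_mul_of_nonneg_left hcd (add_pos ha hb).le]

variable (ha : Integrable a μ) (hb : Integrable b μ)
  (ha0 : ∀ᵐ x ∂μ, 0 < a x) (hb0 : ∀ᵐ x ∂μ, 0 < b x)
include ha hb ha0 hb0

theorem integrable_sq_sub_div_mixture (hp : p ∈ Ioo 0 1) :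
    Integrable (fun x => (a x - b x) ^ 2 / (p * a x + (1 - p) * b x)) μ := by
  refine ((ha.add hb).div_const (min p (1 - p))).mono'
    (((ha.sub hb).aestronglyMeasurable.pow 2).div₀
      ((ha.const_mul p).add (hb.const_mul (1 - p))).aestronglyMeasurable) ?_
  filter_upwards [ha0, hb0] with x hax hbx
  rw [Real.norm_of_nonneg (div_nonneg (sq_nonneg _) (mixture_pos hax hbx hp).le)]
  exact sq_sub_div_mixture_le hax hbx hp

theorem integral_mixture_mul_one_div_odds (hab : ∫ x, a x ∂μ = ∫ x, b x ∂μ)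
    (hp : p ∈ Ioo 0 1) (q : ℝ) :
    ∫ x, (q * a x + (1 - q) * b x) * (1 / (p + (1 - p) * (b x / a x))) ∂μ =
      ∫ x, a x ∂μ + (1 - p) * (q - p) *
        ∫ x, (a x - b x) ^ 2 / (p * a x + (1 - p) * b x) ∂μ := by
  have hm := integrable_sq_sub_div_mixture ha hb ha0 hb0 hp
  calc _ = ∫ x, (q * a x + (1 - q) * b x + (1 - p) * (a x - b x) +
        (1 - p) * (q - p) * ((a x - b x) ^ 2 / (p * a x + (1 - p) * b x))) ∂μ := by
        refine integral_congr_ae ?_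
        filter_upwards [ha0, hb0] with x hax hbx
        exact mixture_mul_one_div_odds hax.ne' (mixture_pos hax hbx hp).ne'
    _ = _ := by
      rw [integral_add (by fun_prop) (hm.const_mul _), integral_add (by fun_prop) (by fun_prop),
        integral_add (by fun_prop) (by fun_prop), integral_const_mul, integral_const_mul,
        integral_const_mul, integral_const_mul, integral_sub ha hb, ← hab]
      ring

theorem eq_or_ae_eq_of_integral_mixture_mul_one_div_odds (hab : ∫ x, a x ∂μ = ∫ x, b x ∂μ)
    (hp : p ∈ Ioo 0 1) {q : ℝ}
    (h : ∫ x, (q * a x + (1 - q) * b x) * (1 / (p + (1 - p) * (b x / a x))) ∂μ =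
      ∫ x, a x ∂μ) :
    p = q ∨ a =ᵐ[μ] b := by
  rw [integral_mixture_mul_one_div_odds ha hb ha0 hb0 hab hp, add_eq_left] at h
  rcases mul_eq_zero.1 h with h | h
  · rcases mul_eq_zero.1 h with h | h
    · exact absurd (sub_eq_zero.1 h) hp.2.ne'
    · exact Or.inl (sub_eq_zero.1 h).symm
  · have hm0 : (fun x => (a x - b x) ^ 2 / (p * a x + (1 - p) * b x)) =ᵐ[μ] 0 := by
      refine (integral_eq_zero_iff_of_nonneg_ae ?_
        (integrable_sq_sub_div_mixture ha hb ha0 hb0 hp)).1 h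
      filter_upwards [ha0, hb0] with x hax hbx
      exact div_nonneg (sq_nonneg _) (mixture_pos hax hbx hp).le
    refine Or.inr ?_
    filter_upwards [hm0, ha0, hb0] with x hx hax hbx
    rw [Pi.zero_apply, div_eq_zero_iff, or_iff_left (mixture_pos hax hbx hp).ne',
      sq_eq_zero_iff, sub_eq_zero] at hx
    exact hx

end Mixture

theorem measure_eq_zero_of_toReal_inter_eq_mul_setIntegral {Ω : Type*} {𝒜 ℋ : MeasurableSpace Ω}
    {P : @Measure Ω 𝒜} [IsFiniteMeasure P] {μ : @Measure Ω ℋ} {A H : Set Ω} {f g : Ω → ℝ}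
    {c d : ℝ} (hf : (P (H ∩ A)).toReal = c * ∫ ω in H, f ω ∂μ)
    (hg : (P (H ∩ Aᶜ)).toReal = d * ∫ ω in H, g ω ∂μ) (hH : μ H = 0) : P H = 0 := by
  rw [setIntegral_measure_zero _ hH, mul_zero, ENNReal.toReal_eq_zero_iff,
    or_iff_left (measure_ne_top _ _)] at hf hg
  rw [← inter_union_compl H A]
  exact measure_union_null hf hg

theorem measure_setOf_div_eq_one_of_ae_eq {Ω : Type*} {𝒜 ℋ : MeasurableSpace Ω}
    {P : @Measure Ω 𝒜} [IsProbabilityMeasure P] {μ : @Measure Ω ℋ} {A : Set Ω} {f g : Ω → ℝ}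
    {c d : ℝ} (hf_meas : @Measurable Ω ℝ ℋ _ f) (hg_meas : @Measurable Ω ℝ ℋ _ g)
    (hf : ∀ H : Set Ω, MeasurableSet[ℋ] H → (P (H ∩ A)).toReal = c * ∫ ω in H, f ω ∂μ)
    (hg : ∀ H : Set Ω, MeasurableSet[ℋ] H → (P (H ∩ Aᶜ)).toReal = d * ∫ ω in H, g ω ∂μ)
    (hf_ne : ∀ᵐ ω ∂μ, f ω ≠ 0) (hfg : f =ᵐ[μ] g) : P {ω | g ω / f ω = 1} = 1 := by
  have hS : MeasurableSet[ℋ] {ω | g ω / f ω = 1} :=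
    (hg_meas.div hf_meas) (measurableSet_singleton 1)
  have hμ : μ {ω | g ω / f ω = 1}ᶜ = 0 := ae_iff.1 <| by
    filter_upwards [hfg, hf_ne] with ω hω hω_ne
    rw [← hω, div_self hω_ne]
  rw [measure_congr (ae_eq_univ.2 (measure_eq_zero_of_toReal_inter_eq_mul_setIntegral
    (hf _ hS.compl) (hg _ hS.compl) hμ)), measure_univ]

theorem total_odds_unbiased_general
    {Ω : Type*} {𝒜 ℋ : MeasurableSpace Ω}
    (P₀ : @Measure Ω 𝒜) [IsProbabilityMeasure P₀]
    (A : Set Ω)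
    (p₀ : ℝ) (hp₀ : p₀ = (P₀ A).toReal) (hp₀0 : 0 < p₀)
    (μ : @Measure Ω ℋ)
    (fA fAc : Ω → ℝ)
    (hfA_meas : @Measurable Ω ℝ ℋ _ fA) (hfAc_meas : @Measurable Ω ℝ ℋ _ fAc)
    (hfA_int : Integrable fA μ) (hfAc_int : Integrable fAc μ)
    (hfA_pos : ∀ᵐ ω ∂μ, 0 < fA ω) (hfAc_pos : ∀ᵐ ω ∂μ, 0 < fAc ω)
    (hdensA : ∀ H : Set Ω, MeasurableSet[ℋ] H →
      (P₀ (H ∩ A)).toReal = p₀ * ∫ ω in H, fA ω ∂μ)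
    (hdensAc : ∀ H : Set Ω, MeasurableSet[ℋ] H →
      (P₀ (H ∩ Aᶜ)).toReal = (1 - p₀) * ∫ ω in H, fAc ω ∂μ)
    (hlam : P₀ {ω | fAc ω / fA ω = 1} < 1)
    (q : ℝ) (hq : q ∈ Set.Ioo (0:ℝ) 1)
    (Q : @Measure Ω ℋ) [IsProbabilityMeasure Q]
    (hQ : ∀ H : Set Ω, MeasurableSet[ℋ] H →
      (Q H).toReal = q * (∫ ω in H, fA ω ∂μ) + (1 - q) * (∫ ω in H, fAc ω ∂μ)) :
    ((1:ℝ) = ∫ ω, 1 / (q + (1 - q) * (fAc ω / fA ω)) ∂Q) ∧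
    (∀ p₁ ∈ Set.Ioo (0:ℝ) 1,
      (1:ℝ) = ∫ ω, 1 / (p₁ + (1 - p₁) * (fAc ω / fA ω)) ∂Q → p₁ = q) ∧
    (∀ P₁star : @Measure Ω (ℋ ⊔ MeasurableSpace.generateFrom {A}),
      (∀ H G : Set Ω, MeasurableSet[ℋ] H → MeasurableSet[ℋ] G →
        (P₁star ((A ∩ H) ∪ (Aᶜ ∩ G))).toReal =
          (∫ ω, H.indicator (fun _ => (1:ℝ)) ω *
              (q / (q + (1 - q) * (fAc ω / fA ω))) ∂Q) +
          (∫ ω, G.indicator (fun _ => (1:ℝ)) ω *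
              ((1 - q) * (fAc ω / fA ω) / (q + (1 - q) * (fAc ω / fA ω))) ∂Q)) →
      (P₁star A).toReal = q) := by
  have hfA_one : ∫ ω, fA ω ∂μ = 1 := by
    have h := hdensA univ MeasurableSet.univ
    rwa [univ_inter, setIntegral_univ, ← hp₀, left_eq_mul₀ hp₀0.ne'] at h
  have hfAc_one : ∫ ω, fAc ω ∂μ = 1 := by
    have h := hQ univ MeasurableSet.univ
    rw [measure_univ, ENNReal.toReal_one, setIntegral_univ, setIntegral_univ, hfA_one] at h
    have : (1 - q) * (∫ ω, fAc ω ∂μ - 1) = 0 := by linarith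
    exact sub_eq_zero.1 ((mul_eq_zero.1 this).resolve_left (sub_pos.2 hq.2).ne')
  have hQ_integral (g : Ω → ℝ) :
      ∫ ω, g ω ∂Q = ∫ ω, (q * fA ω + (1 - q) * fAc ω) * g ω ∂μ := by
    refine integral_eq_integral_mul_of_toReal_apply_eq (w := fun ω => q * fA ω + (1 - q) * fAc ω)
      (by fun_prop) ?_ (fun s hs => ?_) g
    · filter_upwards [hfA_pos, hfAc_pos] with ω ha hb
      exact (mixture_pos ha hb hq).le
    · rw [hQ s hs, integral_add (hfA_int.restrict.const_mul q) (hfAc_int.restrict.const_mul _),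
        integral_const_mul, integral_const_mul]
  have hodds : ¬ fA =ᵐ[μ] fAc := fun h => hlam.ne <|
    measure_setOf_div_eq_one_of_ae_eq hfA_meas hfAc_meas hdensA hdensAc
      (hfA_pos.mono fun _ h => h.ne') h
  have hpart1 : (1:ℝ) = ∫ ω, 1 / (q + (1 - q) * (fAc ω / fA ω)) ∂Q := by
    rw [hQ_integral, integral_mixture_mul_one_div_odds hfA_int hfAc_int hfA_pos hfAc_pos
      (hfA_one.trans hfAc_one.symm) hq, sub_self, mul_zero, zero_mul, add_zero, hfA_one]
  refine ⟨hpart1, fun p hp h => ?_, fun P₁star hP => ?_⟩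
  · rw [hQ_integral] at h
    exact (eq_or_ae_eq_of_integral_mixture_mul_one_div_odds hfA_int hfAc_int hfA_pos hfAc_pos
      (hfA_one.trans hfAc_one.symm) hp (h.symm.trans hfA_one.symm)).resolve_right hodds
  · have h := hP univ ∅ MeasurableSet.univ MeasurableSet.empty
    simp only [inter_univ, inter_empty, union_empty, indicator_univ, indicator_empty,
      one_mul, zero_mul, integral_zero, add_zero] at h
    simp_rw [h, div_eq_mul_one_div q]
    rw [integral_const_mul, ← hpart1, mul_one]

/-- **unbiasedness of the total-odds estimator.** Suppose
`P₀[λ₀ = 1] < 1` and let `P₁ = Q`, where `Q[H] = q·∫_H f_A dμ + (1−q)·∫_H f_{A^c} dμ`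
for a fixed `q ∈ (0,1)`. Then `p₁ = q` is the unique solution in `(0,1)` of
`1 = E₁[1/(p₁ + (1−p₁)·λ₀)]`, and the associated extension `P₁*` of `P₁` to `ℋ^A`
satisfies `P₁*[A] = q`. -/
theorem total_odds_unbiased
    {Ω : Type*} {𝒜 ℋ : MeasurableSpace Ω} (hℋ : ℋ ≤ 𝒜)
    (P₀ : @Measure Ω 𝒜) [IsProbabilityMeasure P₀]
    (A : Set Ω) (hA : MeasurableSet[𝒜] A)
    (p₀ : ℝ) (hp₀ : p₀ = (P₀ A).toReal) (hp₀0 : 0 < p₀) (hp₀1 : p₀ < 1)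
    (μ : @Measure Ω ℋ) [SigmaFinite μ]
    (fA fAc : Ω → ℝ)
    (hfA_meas : @Measurable Ω ℝ ℋ _ fA) (hfAc_meas : @Measurable Ω ℝ ℋ _ fAc)
    (hfA_int : Integrable fA μ) (hfAc_int : Integrable fAc μ)
    (hfA_pos : ∀ᵐ ω ∂μ, 0 < fA ω) (hfAc_pos : ∀ᵐ ω ∂μ, 0 < fAc ω)
    (hdensA : ∀ H : Set Ω, MeasurableSet[ℋ] H →
      (P₀ (H ∩ A)).toReal = p₀ * ∫ ω in H, fA ω ∂μ)
    (hdensAc : ∀ H : Set Ω, MeasurableSet[ℋ] H →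
      (P₀ (H ∩ Aᶜ)).toReal = (1 - p₀) * ∫ ω in H, fAc ω ∂μ)
    (hlam : P₀ {ω | fAc ω / fA ω = 1} < 1)
    (q : ℝ) (hq : q ∈ Set.Ioo (0:ℝ) 1)
    (Q : @Measure Ω ℋ) [IsProbabilityMeasure Q]
    (hQ : ∀ H : Set Ω, MeasurableSet[ℋ] H →
      (Q H).toReal = q * (∫ ω in H, fA ω ∂μ) + (1 - q) * (∫ ω in H, fAc ω ∂μ)) :
    ((1:ℝ) = ∫ ω, 1 / (q + (1 - q) * (fAc ω / fA ω)) ∂Q) ∧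
    (∀ p₁ ∈ Set.Ioo (0:ℝ) 1,
      (1:ℝ) = ∫ ω, 1 / (p₁ + (1 - p₁) * (fAc ω / fA ω)) ∂Q → p₁ = q) ∧
    (∀ P₁star : @Measure Ω (ℋ ⊔ MeasurableSpace.generateFrom {A}),
      (∀ H G : Set Ω, MeasurableSet[ℋ] H → MeasurableSet[ℋ] G →
        (P₁star ((A ∩ H) ∪ (Aᶜ ∩ G))).toReal =
          (∫ ω, H.indicator (fun _ => (1:ℝ)) ω *
              (q / (q + (1 - q) * (fAc ω / fA ω))) ∂Q) +
          (∫ ω, G.indicator (fun _ => (1:ℝ)) ω *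
              ((1 - q) * (fAc ω / fA ω) / (q + (1 - q) * (fAc ω / fA ω))) ∂Q)) →
      (P₁star A).toReal = q) :=
  total_odds_unbiased_general P₀ A p₀ hp₀ hp₀0 μ fA fAc hfA_meas hfAc_meas hfA_int hfAc_int hfA_pos
    hfAc_pos hdensA hdensAc hlam q hq Q hQ
end

section
/- Let Q be the mixture measure Q[H] = q·∫_H f_A dμ + (1−q)·∫_H f_{A^c} dμ on (Ω, ℋ) for a fixed q ∈ (0,1). Then |q − p₀| · ∫ min(f_A, f_{A^c}) dμ ≤ |∫ P₀[A|ℋ] dQ − q| ≤ |q − p₀|. -/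
/-!
By Bayes' formula, `P₀[A|ℋ] = p₀ f_A / (p₀ f_A + (1 - p₀) f_{A^c})` μ-almost everywhere.
Integrating this posterior against the mixture density `q f_A + (1 - q) f_{A^c}` of `Q` gives
exactly `q + (p₀ - q) ∫ k dμ`, where `k` is the harmonic mean of `f_A` and `f_{A^c}` with weights
`1 - p₀` and `p₀`. Pointwise, `k` lies between `min (f_A, f_{A^c})` and the arithmetic mean
`(1 - p₀) f_A + p₀ f_{A^c}`, whose integral is `1`.
-/

open MeasureTheory Set

/-- The weighted harmonic mean `((1 - p) / x + p / y)⁻¹`. -/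
noncomputable def harmonicMix (p x y : ℝ) : ℝ := x * y / (p * x + (1 - p) * y)

section harmonicMix

variable {p x y : ℝ}

lemma mix_pos (hp0 : 0 ≤ p) (hp1 : p ≤ 1) (hx : 0 < x) (hy : 0 < y) :
    0 < p * x + (1 - p) * y := by
  rcases hp0.lt_or_eq with hp | rfl
  · nlinarith
  · simpa using hy

lemma harmonicMix_nonneg (hp0 : 0 ≤ p) (hp1 : p ≤ 1) (hx : 0 ≤ x) (hy : 0 ≤ y) :
    0 ≤ harmonicMix p x y := by
  have := sub_nonneg.2 hp1
  unfold harmonicMix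
  positivity

lemma min_le_harmonicMix (hp0 : 0 ≤ p) (hp1 : p ≤ 1) (hx : 0 < x) (hy : 0 < y) :
    min x y ≤ harmonicMix p x y := by
  rw [harmonicMix, le_div_iff₀ (mix_pos hp0 hp1 hx hy)]
  have hmx : min x y * x ≤ y * x := mul_le_mul_of_nonneg_right (min_le_right x y) hx.le
  have hmy : min x y * y ≤ x * y := mul_le_mul_of_nonneg_right (min_le_left x y) hy.le
  nlinarith [mul_le_mul_of_nonneg_left hmx hp0, mul_le_mul_of_nonneg_left hmy (sub_nonneg.2 hp1)]

lemma harmonicMix_le (hp0 : 0 ≤ p) (hp1 : p ≤ 1) (hx : 0 < x) (hy : 0 < y) :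
    harmonicMix p x y ≤ p * y + (1 - p) * x := by
  rw [harmonicMix, div_le_iff₀ (mix_pos hp0 hp1 hx hy)]
  nlinarith [mul_nonneg (mul_nonneg hp0 (sub_nonneg.2 hp1)) (sq_nonneg (x - y))]

lemma mix_mul_div_mix_eq (q : ℝ) (hw : p * x + (1 - p) * y ≠ 0) :
    (q * x + (1 - q) * y) * (p * x / (p * x + (1 - p) * y)) =
      q * x + (p - q) * harmonicMix p x y := by
  rw [harmonicMix, mul_div_assoc', mul_div_assoc', add_div' _ _ _ hw]
  ring

end harmonicMix

section

variable {Ω : Type*}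

lemma eq_withDensity_ofReal_of_measureReal_eq {m : MeasurableSpace Ω} {ν μ : Measure Ω}
    [IsFiniteMeasure ν] {w : Ω → ℝ} (hw_int : Integrable w μ) (hw_nn : 0 ≤ᵐ[μ] w)
    (h : ∀ s, MeasurableSet s → ν.real s = ∫ x in s, w x ∂μ) :
    ν = μ.withDensity fun x => ENNReal.ofReal (w x) := by
  ext s hs
  rw [withDensity_apply _ hs, ← ofReal_integral_eq_lintegral_ofReal hw_int.integrableOn
    (ae_restrict_of_ae hw_nn), ← h s hs, ofReal_measureReal (measure_ne_top _ _)]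

lemma eq_withDensity_mix {m : MeasurableSpace Ω} {ν μ : Measure Ω} [IsFiniteMeasure ν]
    {f g : Ω → ℝ} {a b : ℝ} (ha : 0 ≤ a) (hb : 0 ≤ b) (hf_int : Integrable f μ)
    (hg_int : Integrable g μ) (hf : 0 ≤ᵐ[μ] f) (hg : 0 ≤ᵐ[μ] g)
    (h : ∀ s, MeasurableSet s → ν.real s = a * ∫ x in s, f x ∂μ + b * ∫ x in s, g x ∂μ) :
    ν = μ.withDensity fun x => ENNReal.ofReal (a * f x + b * g x) := by
  have hmix_nn : 0 ≤ᵐ[μ] fun x => a * f x + b * g x := by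
    filter_upwards [hf, hg] with x hfx hgx using add_nonneg (mul_nonneg ha hfx) (mul_nonneg hb hgx)
  refine eq_withDensity_ofReal_of_measureReal_eq ((hf_int.const_mul a).add (hg_int.const_mul b))
    hmix_nn fun s hs => ?_
  rw [h s hs, integral_add (hf_int.integrableOn.const_mul a) (hg_int.integrableOn.const_mul b),
    integral_const_mul, integral_const_mul]

lemma integral_eq_one_of_measureReal_inter_eq_mul {m m₀ : MeasurableSpace Ω} {P : Measure[m₀] Ω}
    {μ : Measure[m] Ω} {B : Set Ω} {c : ℝ} (hc : P.real B = c) (hc0 : c ≠ 0) {f : Ω → ℝ}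
    (h : ∀ s, MeasurableSet[m] s → P.real (s ∩ B) = c * ∫ x in s, f x ∂μ) :
    ∫ x, f x ∂μ = 1 := by
  have huniv := h univ MeasurableSet.univ
  rw [univ_inter, hc, Measure.restrict_univ] at huniv
  exact (mul_eq_left₀ hc0).1 huniv.symm

lemma integral_div_withDensity_ofReal {m : MeasurableSpace Ω} {μ : Measure Ω} {v w : Ω → ℝ}
    (hw : AEMeasurable w μ) (hvw : ∀ᵐ x ∂μ, 0 ≤ v x ∧ v x ≤ w x) :
    ∫ x, v x / w x ∂μ.withDensity (fun x => ENNReal.ofReal (w x)) = ∫ x, v x ∂μ := by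
  rw [integral_withDensity_eq_integral_toReal_smul₀ hw.ennreal_ofReal
    (ae_of_all _ fun _ => ENNReal.ofReal_lt_top)]
  refine integral_congr_ae (hvw.mono fun x ⟨hv0, hvw⟩ => ?_)
  dsimp only
  rw [ENNReal.toReal_ofReal (hv0.trans hvw), smul_eq_mul]
  exact mul_div_cancel_of_imp' fun hw0 => le_antisymm (hw0 ▸ hvw) hv0

lemma ae_eq_condExp_indicator_div {m m₀ : MeasurableSpace Ω} (hm : m ≤ m₀) {P : Measure[m₀] Ω}
    [IsFiniteMeasure P] {A : Set Ω} (hA : MeasurableSet[m₀] A) {μ : Measure[m] Ω} {v w : Ω → ℝ}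
    (hv : Measurable[m] v) (hw : Measurable[m] w) (hvw : ∀ᵐ x ∂μ, 0 ≤ v x ∧ v x ≤ w x)
    (hP : P.trim hm = μ.withDensity fun x => ENNReal.ofReal (w x))
    (hPA : ∀ s, MeasurableSet[m] s → P.real (s ∩ A) = ∫ x in s, v x ∂μ) :
    (fun x => v x / w x) =ᵐ[P] condExp m P (A.indicator fun _ => (1 : ℝ)) := by
  have hratio : StronglyMeasurable[m] fun x => v x / w x := (hv.div hw).stronglyMeasurable
  have hratio_le : ∀ᵐ x ∂P, ‖v x / w x‖ ≤ 1 := by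
    refine ae_of_ae_trim hm ?_
    rw [hP]
    filter_upwards [(withDensity_absolutelyContinuous μ _).ae_le hvw] with x ⟨hv0, hvw⟩
    rw [Real.norm_of_nonneg (div_nonneg hv0 (hv0.trans hvw))]
    exact div_le_one_of_le₀ hvw (hv0.trans hvw)
  have hratio_int : Integrable (fun x => v x / w x) P :=
    (integrable_const 1).mono' (hratio.mono hm).aestronglyMeasurable hratio_le
  refine ae_eq_condExp_of_forall_setIntegral_eq hm ((integrable_const 1).indicator hA)
    (fun s _ _ => hratio_int.integrableOn) (fun s hs _ => ?_) hratio.aestronglyMeasurable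
  rw [setIntegral_trim hm hratio hs, hP, restrict_withDensity hs,
    integral_div_withDensity_ofReal hw.aemeasurable (ae_restrict_of_ae hvw), ← hPA s hs,
    setIntegral_indicator hA, setIntegral_const, smul_eq_mul, mul_one]

lemma ae_eq_of_ae_eq_of_trim_eq_withDensity {E : Type*} [TopologicalSpace E]
    [TopologicalSpace.MetrizableSpace E]
    {m m₀ : MeasurableSpace Ω} (hm : m ≤ m₀) {P : Measure[m₀] Ω} {μ : Measure[m] Ω} {w : Ω → ℝ}
    (hw : AEMeasurable w μ) (hw_pos : ∀ᵐ x ∂μ, 0 < w x)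
    (hP : P.trim hm = μ.withDensity fun x => ENNReal.ofReal (w x)) {f g : Ω → E}
    (hf : StronglyMeasurable[m] f) (hg : StronglyMeasurable[m] g) (hfg : f =ᵐ[P] g) :
    f =ᵐ[μ] g := by
  have hfg_trim := hf.ae_eq_trim_of_stronglyMeasurable hm hg hfg
  rwa [hP, withDensity_ae_eq hw.ennreal_ofReal
    (hw_pos.mono fun x hx => (ENNReal.ofReal_pos.2 hx).ne')] at hfg_trim

lemma condExp_indicator_ae_eq_posterior {m m₀ : MeasurableSpace Ω} (hm : m ≤ m₀)
    {P : Measure[m₀] Ω} [IsFiniteMeasure P] {A : Set Ω} (hA : MeasurableSet[m₀] A)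
    {μ : Measure[m] Ω} {f g : Ω → ℝ} {p : ℝ} (hp0 : 0 ≤ p) (hp1 : p ≤ 1)
    (hf_meas : Measurable[m] f) (hg_meas : Measurable[m] g) (hf_int : Integrable f μ)
    (hg_int : Integrable g μ) (hf : ∀ᵐ x ∂μ, 0 < f x) (hg : ∀ᵐ x ∂μ, 0 < g x)
    (hPA : ∀ s, MeasurableSet[m] s → P.real (s ∩ A) = p * ∫ x in s, f x ∂μ)
    (hPAc : ∀ s, MeasurableSet[m] s → P.real (s ∩ Aᶜ) = (1 - p) * ∫ x in s, g x ∂μ) :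
    condExp m P (A.indicator fun _ => (1 : ℝ)) =ᵐ[μ]
      fun x => p * f x / (p * f x + (1 - p) * g x) := by
  have htrim : P.trim hm = μ.withDensity fun x => ENNReal.ofReal (p * f x + (1 - p) * g x) :=
    eq_withDensity_mix hp0 (sub_nonneg.2 hp1) hf_int hg_int (hf.mono fun _ h => h.le)
      (hg.mono fun _ h => h.le) fun s hs => by
        rw [measureReal_def, trim_measurableSet_eq hm hs, ← measureReal_def,
          ← measureReal_inter_add_sdiff (s := s) hA, sdiff_eq, hPA s hs, hPAc s hs]
  have hmix_meas := (hf_meas.const_mul p).add (hg_meas.const_mul (1 - p))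
  have hmix_pos : ∀ᵐ x ∂μ, 0 < p * f x + (1 - p) * g x := by
    filter_upwards [hf, hg] with x hfx hgx using mix_pos hp0 hp1 hfx hgx
  have hposterior_le : ∀ᵐ x ∂μ, 0 ≤ p * f x ∧ p * f x ≤ p * f x + (1 - p) * g x := by
    filter_upwards [hf, hg] with x hfx hgx
    have := sub_nonneg.2 hp1
    exact ⟨by positivity, le_add_of_nonneg_right (by positivity)⟩
  refine (ae_eq_of_ae_eq_of_trim_eq_withDensity hm hmix_meas.aemeasurable hmix_pos htrim
    ((hf_meas.const_mul p).div hmix_meas).stronglyMeasurable stronglyMeasurable_condExp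
    (ae_eq_condExp_indicator_div hm hA (hf_meas.const_mul p) hmix_meas hposterior_le htrim
      fun s hs => by rw [integral_const_mul]; exact hPA s hs)).symm

section Mixture

variable {m : MeasurableSpace Ω} {μ : Measure Ω} {f g : Ω → ℝ} {p : ℝ}

lemma integrable_harmonicMix (hp0 : 0 ≤ p) (hp1 : p ≤ 1) (hf_int : Integrable f μ)
    (hg_int : Integrable g μ) (hf : ∀ᵐ x ∂μ, 0 < f x) (hg : ∀ᵐ x ∂μ, 0 < g x) :
    Integrable (fun x => harmonicMix p (f x) (g x)) μ := by
  refine ((hg_int.const_mul p).add (hf_int.const_mul (1 - p))).mono' ?_ ?_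
  · have := hf_int.aemeasurable
    have := hg_int.aemeasurable
    exact (show AEMeasurable _ μ by unfold harmonicMix; fun_prop).aestronglyMeasurable
  · filter_upwards [hf, hg] with x hfx hgx
    rw [Real.norm_of_nonneg (harmonicMix_nonneg hp0 hp1 hfx.le hgx.le)]
    exact harmonicMix_le hp0 hp1 hfx hgx

lemma integral_min_le_integral_harmonicMix (hp0 : 0 ≤ p) (hp1 : p ≤ 1) (hf_int : Integrable f μ)
    (hg_int : Integrable g μ) (hf : ∀ᵐ x ∂μ, 0 < f x) (hg : ∀ᵐ x ∂μ, 0 < g x) :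
    ∫ x, min (f x) (g x) ∂μ ≤ ∫ x, harmonicMix p (f x) (g x) ∂μ :=
  integral_mono_ae (hf_int.inf hg_int) (integrable_harmonicMix hp0 hp1 hf_int hg_int hf hg)
    (by filter_upwards [hf, hg] with x hfx hgx using min_le_harmonicMix hp0 hp1 hfx hgx)

lemma integral_harmonicMix_le_one (hp0 : 0 ≤ p) (hp1 : p ≤ 1) (hf_int : Integrable f μ)
    (hg_int : Integrable g μ) (hf : ∀ᵐ x ∂μ, 0 < f x) (hg : ∀ᵐ x ∂μ, 0 < g x)
    (hf1 : ∫ x, f x ∂μ = 1) (hg1 : ∫ x, g x ∂μ = 1) :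
    ∫ x, harmonicMix p (f x) (g x) ∂μ ≤ 1 := by
  calc ∫ x, harmonicMix p (f x) (g x) ∂μ ≤ ∫ x, p * g x + (1 - p) * f x ∂μ :=
        integral_mono_ae (integrable_harmonicMix hp0 hp1 hf_int hg_int hf hg)
          ((hg_int.const_mul p).add (hf_int.const_mul (1 - p)))
          (by filter_upwards [hf, hg] with x hfx hgx using harmonicMix_le hp0 hp1 hfx hgx)
    _ = 1 := by
      rw [integral_add (hg_int.const_mul p) (hf_int.const_mul (1 - p)), integral_const_mul,
        integral_const_mul, hf1, hg1]
      ring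

lemma integral_posterior_withDensity_mix (hp0 : 0 ≤ p) (hp1 : p ≤ 1) {q : ℝ} (hq0 : 0 ≤ q)
    (hq1 : q ≤ 1) (hf_int : Integrable f μ) (hg_int : Integrable g μ) (hf : ∀ᵐ x ∂μ, 0 < f x)
    (hg : ∀ᵐ x ∂μ, 0 < g x) (hf1 : ∫ x, f x ∂μ = 1) :
    ∫ x, p * f x / (p * f x + (1 - p) * g x)
        ∂μ.withDensity (fun x => ENNReal.ofReal (q * f x + (1 - q) * g x)) =
      q + (p - q) * ∫ x, harmonicMix p (f x) (g x) ∂μ := by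
  have hmix : AEMeasurable (fun x => q * f x + (1 - q) * g x) μ := by
    have := hf_int.aemeasurable
    have := hg_int.aemeasurable
    fun_prop
  rw [integral_withDensity_eq_integral_toReal_smul₀ hmix.ennreal_ofReal
    (ae_of_all _ fun _ => ENNReal.ofReal_lt_top)]
  have hpoint : ∀ᵐ x ∂μ, (ENNReal.ofReal (q * f x + (1 - q) * g x)).toReal •
      (p * f x / (p * f x + (1 - p) * g x)) = q * f x + (p - q) * harmonicMix p (f x) (g x) := by
    filter_upwards [hf, hg] with x hfx hgx
    rw [ENNReal.toReal_ofReal (mix_pos hq0 hq1 hfx hgx).le, smul_eq_mul,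
      mix_mul_div_mix_eq q (mix_pos hp0 hp1 hfx hgx).ne']
  rw [integral_congr_ae hpoint, integral_add (hf_int.const_mul q)
    ((integrable_harmonicMix hp0 hp1 hf_int hg_int hf hg).const_mul _), integral_const_mul,
    integral_const_mul, hf1, mul_one]

end Mixture

end

theorem total_probability_bias_bounds_general
    {Ω : Type*} {𝒜 ℋ : MeasurableSpace Ω} (hℋ : ℋ ≤ 𝒜)
    (P₀ : @Measure Ω 𝒜) [IsProbabilityMeasure P₀]
    (A : Set Ω) (hA : MeasurableSet[𝒜] A)
    (p₀ : ℝ) (hp₀ : p₀ = (P₀ A).toReal) (hp₀0 : 0 < p₀) (hp₀1 : p₀ < 1)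
    (μ : @Measure Ω ℋ)
    (fA fAc : Ω → ℝ)
    (hfA_meas : @Measurable Ω ℝ ℋ _ fA) (hfAc_meas : @Measurable Ω ℝ ℋ _ fAc)
    (hfA_int : Integrable fA μ) (hfAc_int : Integrable fAc μ)
    (hfA_pos : ∀ᵐ ω ∂μ, 0 < fA ω) (hfAc_pos : ∀ᵐ ω ∂μ, 0 < fAc ω)
    (hdensA : ∀ H : Set Ω, MeasurableSet[ℋ] H →
      (P₀ (H ∩ A)).toReal = p₀ * ∫ ω in H, fA ω ∂μ)
    (hdensAc : ∀ H : Set Ω, MeasurableSet[ℋ] H →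
      (P₀ (H ∩ Aᶜ)).toReal = (1 - p₀) * ∫ ω in H, fAc ω ∂μ)
    (q : ℝ) (hq : q ∈ Set.Ioo (0:ℝ) 1)
    (Q : @Measure Ω ℋ) [IsProbabilityMeasure Q]
    (hQ : ∀ H : Set Ω, MeasurableSet[ℋ] H →
      (Q H).toReal = q * (∫ ω in H, fA ω ∂μ) + (1 - q) * (∫ ω in H, fAc ω ∂μ)) :
    |q - p₀| * (∫ ω, min (fA ω) (fAc ω) ∂μ) ≤
      |(∫ ω, condExp ℋ P₀ (A.indicator fun _ => (1:ℝ)) ω ∂Q) - q| ∧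
    |(∫ ω, condExp ℋ P₀ (A.indicator fun _ => (1:ℝ)) ω ∂Q) - q| ≤ |q - p₀| := by
  obtain ⟨hq0, hq1⟩ := hq
  have hintA := integral_eq_one_of_measureReal_inter_eq_mul hp₀.symm hp₀0.ne' hdensA
  have hPAc : P₀.real Aᶜ = 1 - p₀ := by rw [probReal_compl_eq_one_sub hA, measureReal_def, hp₀]
  have hintAc := integral_eq_one_of_measureReal_inter_eq_mul hPAc (sub_pos.2 hp₀1).ne' hdensAc
  have hcond := condExp_indicator_ae_eq_posterior hℋ hA hp₀0.le hp₀1.le hfA_meas hfAc_meas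
    hfA_int hfAc_int hfA_pos hfAc_pos hdensA hdensAc
  have hQ_eq := eq_withDensity_mix hq0.le (sub_nonneg.2 hq1.le) hfA_int hfAc_int
    (hfA_pos.mono fun _ h => h.le) (hfAc_pos.mono fun _ h => h.le) hQ
  have hbias : ∫ ω, condExp ℋ P₀ (A.indicator fun _ => (1:ℝ)) ω ∂Q =
      q + (p₀ - q) * ∫ ω, harmonicMix p₀ (fA ω) (fAc ω) ∂μ := by
    rw [hQ_eq, integral_congr_ae ((withDensity_absolutelyContinuous μ _).ae_eq hcond),
      integral_posterior_withDensity_mix hp₀0.le hp₀1.le hq0.le hq1.le hfA_int hfAc_int hfA_pos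
        hfAc_pos hintA]
  have hmean_nonneg : 0 ≤ ∫ ω, harmonicMix p₀ (fA ω) (fAc ω) ∂μ := integral_nonneg_of_ae <| by
    filter_upwards [hfA_pos, hfAc_pos] with ω h1 h2 using
      harmonicMix_nonneg hp₀0.le hp₀1.le h1.le h2.le
  rw [hbias, add_sub_cancel_left, abs_mul, abs_of_nonneg hmean_nonneg, abs_sub_comm]
  exact ⟨mul_le_mul_of_nonneg_left (integral_min_le_integral_harmonicMix hp₀0.le hp₀1.le hfA_int
      hfAc_int hfA_pos hfAc_pos) (abs_nonneg _),
    mul_le_of_le_one_right (abs_nonneg _) (integral_harmonicMix_le_one hp₀0.le hp₀1.le hfA_int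
      hfAc_int hfA_pos hfAc_pos hintA hintAc)⟩

/-- **bias bounds for the total-probability estimator.** Let `Q` be the
mixture measure `Q[H] = q·∫_H f_A dμ + (1−q)·∫_H f_{A^c} dμ` for `q ∈ (0,1)`. Then
`|q − p₀| · ∫ min(f_A, f_{A^c}) dμ ≤ |∫ P₀[A|ℋ] dQ − q| ≤ |q − p₀|`. -/
theorem total_probability_bias_bounds
    {Ω : Type*} {𝒜 ℋ : MeasurableSpace Ω} (hℋ : ℋ ≤ 𝒜)
    (P₀ : @Measure Ω 𝒜) [IsProbabilityMeasure P₀]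
    (A : Set Ω) (hA : MeasurableSet[𝒜] A)
    (p₀ : ℝ) (hp₀ : p₀ = (P₀ A).toReal) (hp₀0 : 0 < p₀) (hp₀1 : p₀ < 1)
    (μ : @Measure Ω ℋ) [SigmaFinite μ]
    (fA fAc : Ω → ℝ)
    (hfA_meas : @Measurable Ω ℝ ℋ _ fA) (hfAc_meas : @Measurable Ω ℝ ℋ _ fAc)
    (hfA_int : Integrable fA μ) (hfAc_int : Integrable fAc μ)
    (hfA_pos : ∀ᵐ ω ∂μ, 0 < fA ω) (hfAc_pos : ∀ᵐ ω ∂μ, 0 < fAc ω)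
    (hdensA : ∀ H : Set Ω, MeasurableSet[ℋ] H →
      (P₀ (H ∩ A)).toReal = p₀ * ∫ ω in H, fA ω ∂μ)
    (hdensAc : ∀ H : Set Ω, MeasurableSet[ℋ] H →
      (P₀ (H ∩ Aᶜ)).toReal = (1 - p₀) * ∫ ω in H, fAc ω ∂μ)
    (q : ℝ) (hq : q ∈ Set.Ioo (0:ℝ) 1)
    (Q : @Measure Ω ℋ) [IsProbabilityMeasure Q]
    (hQ : ∀ H : Set Ω, MeasurableSet[ℋ] H →
      (Q H).toReal = q * (∫ ω in H, fA ω ∂μ) + (1 - q) * (∫ ω in H, fAc ω ∂μ)) :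
    |q - p₀| * (∫ ω, min (fA ω) (fAc ω) ∂μ) ≤
      |(∫ ω, condExp ℋ P₀ (A.indicator fun _ => (1:ℝ)) ω ∂Q) - q| ∧
    |(∫ ω, condExp ℋ P₀ (A.indicator fun _ => (1:ℝ)) ω ∂Q) - q| ≤ |q - p₀| :=
  total_probability_bias_bounds_general hℋ P₀ A hA p₀ hp₀ hp₀0 hp₀1 μ fA fAc hfA_meas hfAc_meas
    hfA_int hfAc_int hfA_pos hfAc_pos hdensA hdensAc q hq Q hQ
end

section
/- Let Q be the mixture measure Q[H] = q·∫_H f_A dμ + (1−q)·∫_H f_{A^c} dμ on (Ω, ℋ) for a fixed q ∈ (0,1). Then ∫ P₀[A|ℋ] dQ − q = (p₀ − q) · ∫ f_A·f_{A^c}/(p₀·f_A + (1−p₀)·f_{A^c}) dμ. -/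
open MeasureTheory Set

/-!
On `ℋ` the law of `P₀` has μ-density `D = p₀ f_A + (1 - p₀) f_{A^c}` and `H ↦ P₀[H ∩ A]` has
density `p₀ f_A`, so Bayes' formula gives `P₀[A|ℋ] = p₀ f_A / D`. The measure `Q` has density
`w = q f_A + (1 - q) f_{A^c}`, and `w · p₀ f_A / D = q f_A + (p₀ - q) f_A f_{A^c} / D`;
integrating against `μ` and using `∫ f_A dμ = 1` gives the formula.
-/

theorem mixture_pos_s12 {p x y : ℝ} (hp : p ∈ Ioo 0 1) (hx : 0 < x) (hy : 0 < y) :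
    0 < p * x + (1 - p) * y :=
  add_pos (mul_pos hp.1 hx) (mul_pos (sub_pos.2 hp.2) hy)

theorem mul_div_mixture_le {p x y : ℝ} (hp : p ∈ Ioo 0 1) (hx : 0 < x) (hy : 0 < y) :
    x * y / (p * x + (1 - p) * y) ≤ y / p := by
  rw [div_le_div_iff₀ (mixture_pos_s12 hp hx hy) hp.1]
  nlinarith [mul_pos (sub_pos.2 hp.2) (mul_pos hy hy)]

theorem mixture_mul_div_mixture {K : Type*} [Field K] {p q x y : K}
    (h : p * x + (1 - p) * y ≠ 0) :
    (q * x + (1 - q) * y) * (p * x / (p * x + (1 - p) * y)) =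
      q * x + (p - q) * (x * y / (p * x + (1 - p) * y)) := by
  rw [mul_div_assoc', mul_div_assoc', add_div' _ _ _ h, div_left_inj' h]
  ring

section Mixture

variable {Ω : Type*} {m : MeasurableSpace Ω} {μ ν : Measure Ω}

theorem ae_mixture_pos {p : ℝ} (hp : p ∈ Ioo 0 1) {f g : Ω → ℝ}
    (hf_pos : ∀ᵐ x ∂μ, 0 < f x) (hg_pos : ∀ᵐ x ∂μ, 0 < g x) :
    ∀ᵐ x ∂μ, 0 < p * f x + (1 - p) * g x := by
  filter_upwards [hf_pos, hg_pos] with x hfx hgx using mixture_pos_s12 hp hfx hgx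

theorem eq_withDensity_ofReal_of_toReal_eq_setIntegral [IsFiniteMeasure ν] {f : Ω → ℝ}
    (hf : Integrable f μ) (hf_nonneg : 0 ≤ᵐ[μ] f)
    (h : ∀ s, MeasurableSet s → (ν s).toReal = ∫ x in s, f x ∂μ) :
    ν = μ.withDensity fun x => ENNReal.ofReal (f x) := by
  ext s hs
  rw [withDensity_apply _ hs, ← ofReal_integral_eq_lintegral_ofReal hf.restrict
    (ae_restrict_of_ae hf_nonneg), ← h s hs, ENNReal.ofReal_toReal (measure_ne_top ν s)]

theorem eq_withDensity_mixture_of_toReal_eq [IsFiniteMeasure ν] {p : ℝ} (hp : p ∈ Ioo 0 1)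
    {f g : Ω → ℝ} (hf : Integrable f μ) (hg : Integrable g μ)
    (hf_pos : ∀ᵐ x ∂μ, 0 < f x) (hg_pos : ∀ᵐ x ∂μ, 0 < g x)
    (h : ∀ s, MeasurableSet s →
      (ν s).toReal = p * (∫ x in s, f x ∂μ) + (1 - p) * ∫ x in s, g x ∂μ) :
    ν = μ.withDensity fun x => ENNReal.ofReal (p * f x + (1 - p) * g x) := by
  refine eq_withDensity_ofReal_of_toReal_eq_setIntegral
    ((hf.const_mul p).add (hg.const_mul (1 - p)))
    ((ae_mixture_pos hp hf_pos hg_pos).mono fun _ h => h.le) fun s hs => ?_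
  rw [h s hs, integral_add (hf.restrict.const_mul p) (hg.restrict.const_mul (1 - p)),
    integral_const_mul, integral_const_mul]

theorem integral_withDensity_ofReal {E : Type*} [NormedAddCommGroup E] [NormedSpace ℝ E]
    {w : Ω → ℝ} (hw : Measurable w) (hw_nonneg : 0 ≤ᵐ[μ] w) (g : Ω → E) :
    ∫ x, g x ∂μ.withDensity (fun x => ENNReal.ofReal (w x)) = ∫ x, w x • g x ∂μ := by
  rw [integral_withDensity_eq_integral_toReal_smul hw.ennreal_ofReal
    (ae_of_all _ fun _ => ENNReal.ofReal_lt_top)]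
  refine integral_congr_ae ?_
  filter_upwards [hw_nonneg] with x hx
  rw [ENNReal.toReal_ofReal hx]

theorem integrable_mul_div_mixture {p : ℝ} (hp : p ∈ Ioo 0 1) {f g : Ω → ℝ}
    (hf : Measurable f) (hg : Measurable g) (hg_int : Integrable g μ)
    (hf_pos : ∀ᵐ x ∂μ, 0 < f x) (hg_pos : ∀ᵐ x ∂μ, 0 < g x) :
    Integrable (fun x => f x * g x / (p * f x + (1 - p) * g x)) μ := by
  refine .mono' (hg_int.div_const p) (by fun_prop : Measurable fun x =>
    f x * g x / (p * f x + (1 - p) * g x)).aestronglyMeasurable ?_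
  filter_upwards [hf_pos, hg_pos] with x hfx hgx
  rw [Real.norm_of_nonneg (div_nonneg (mul_pos hfx hgx).le (mixture_pos_s12 hp hfx hgx).le)]
  exact mul_div_mixture_le hp hfx hgx

theorem integral_withDensity_mixture_div_mixture {p q : ℝ} (hp : p ∈ Ioo 0 1)
    (hq : q ∈ Ioo 0 1) {f g : Ω → ℝ} (hf : Measurable f) (hg : Measurable g)
    (hf_int : Integrable f μ) (hg_int : Integrable g μ)
    (hf_pos : ∀ᵐ x ∂μ, 0 < f x) (hg_pos : ∀ᵐ x ∂μ, 0 < g x) :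
    ∫ x, p * f x / (p * f x + (1 - p) * g x)
        ∂μ.withDensity (fun x => ENNReal.ofReal (q * f x + (1 - q) * g x)) =
      q * (∫ x, f x ∂μ) + (p - q) * ∫ x, f x * g x / (p * f x + (1 - p) * g x) ∂μ := by
  rw [integral_withDensity_ofReal (by fun_prop)
    ((ae_mixture_pos hq hf_pos hg_pos).mono fun _ h => h.le)]
  simp only [smul_eq_mul]
  rw [integral_congr_ae ((ae_mixture_pos hp hf_pos hg_pos).mono fun _ h =>
      mixture_mul_div_mixture h.ne'),
    integral_add (hf_int.const_mul q)
      ((integrable_mul_div_mixture hp hf hg hg_int hf_pos hg_pos).const_mul _),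
    integral_const_mul, integral_const_mul]

end Mixture

theorem condExp_indicator_ae_eq_div {Ω : Type*} {m m₀ : MeasurableSpace Ω} (hm : m ≤ m₀)
    {P : Measure[m₀] Ω} [IsFiniteMeasure P] {μ : Measure[m] Ω} {A : Set Ω}
    (hA : MeasurableSet[m₀] A) {a D : Ω → ℝ} (ha : Measurable[m] a) (hD : Measurable[m] D)
    (ha_nonneg : 0 ≤ᵐ[μ] a) (ha_le : a ≤ᵐ[μ] D) (hD_pos : ∀ᵐ x ∂μ, 0 < D x)
    (hP : P.trim hm = μ.withDensity fun x => ENNReal.ofReal (D x))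
    (hPA : ∀ s, MeasurableSet[m] s → (P (s ∩ A)).toReal = ∫ x in s, a x ∂μ) :
    (fun x => a x / D x) =ᵐ[μ] P[A.indicator fun _ => (1 : ℝ) | m] := by
  have hg : StronglyMeasurable[m] fun x => a x / D x := (ha.div hD).stronglyMeasurable
  have hg_bdd : ∀ᵐ x ∂P, ‖a x / D x‖ ≤ 1 := by
    refine ae_of_ae_trim hm ?_
    rw [hP]
    refine (withDensity_absolutelyContinuous μ _).ae_le ?_
    filter_upwards [ha_nonneg, ha_le, hD_pos] with x h0 hle hpos
    rw [Real.norm_of_nonneg (div_nonneg h0 hpos.le)]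
    exact div_le_one_of_le₀ hle hpos.le
  have hg_int : Integrable (fun x => a x / D x) P :=
    .of_bound (hg.mono hm).aestronglyMeasurable 1 hg_bdd
  have hce : (fun x => a x / D x) =ᵐ[P] P[A.indicator fun _ => (1 : ℝ) | m] := by
    refine ae_eq_condExp_of_forall_setIntegral_eq hm ((integrable_const 1).indicator hA)
      (fun s _ _ => hg_int.integrableOn) (fun s hs _ => ?_) hg.aestronglyMeasurable
    calc ∫ x in s, a x / D x ∂P
        = ∫ x in s, D x • (a x / D x) ∂μ := by
          rw [setIntegral_trim hm hg hs, hP, restrict_withDensity hs,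
            integral_withDensity_ofReal hD (ae_restrict_of_ae (hD_pos.mono fun _ h => h.le))]
      _ = ∫ x in s, a x ∂μ := by
          refine integral_congr_ae (ae_restrict_of_ae ?_)
          filter_upwards [hD_pos] with x hx
          exact mul_div_cancel₀ _ hx.ne'
      _ = ∫ x in s, A.indicator (fun _ => (1 : ℝ)) x ∂P := by
          rw [← hPA s hs, setIntegral_indicator hA, setIntegral_const, smul_eq_mul, mul_one,
            measureReal_def]
  have hce_trim := StronglyMeasurable.ae_eq_trim_of_stronglyMeasurable hm hg
    stronglyMeasurable_condExp hce
  rw [hP] at hce_trim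
  exact (withDensity_ae_eq hD.ennreal_ofReal.aemeasurable
    (hD_pos.mono fun _ h => (ENNReal.ofReal_pos.2 h).ne')).1 hce_trim

theorem condExp_indicator_ae_eq_mixture_div {Ω : Type*} {m m₀ : MeasurableSpace Ω}
    (hm : m ≤ m₀) {P : Measure[m₀] Ω} [IsFiniteMeasure P] {μ : Measure[m] Ω} {A : Set Ω}
    (hA : MeasurableSet[m₀] A) {p : ℝ} (hp : p ∈ Ioo 0 1) {f g : Ω → ℝ}
    (hf : Measurable[m] f) (hg : Measurable[m] g) (hf_int : Integrable f μ)
    (hg_int : Integrable g μ) (hf_pos : ∀ᵐ x ∂μ, 0 < f x) (hg_pos : ∀ᵐ x ∂μ, 0 < g x)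
    (hPA : ∀ s, MeasurableSet[m] s → (P (s ∩ A)).toReal = p * ∫ x in s, f x ∂μ)
    (hPAc : ∀ s, MeasurableSet[m] s → (P (s ∩ Aᶜ)).toReal = (1 - p) * ∫ x in s, g x ∂μ) :
    (fun x => p * f x / (p * f x + (1 - p) * g x)) =ᵐ[μ]
      P[A.indicator fun _ => (1 : ℝ) | m] := by
  have hP : P.trim hm = μ.withDensity fun x => ENNReal.ofReal (p * f x + (1 - p) * g x) :=
    eq_withDensity_mixture_of_toReal_eq hp hf_int hg_int hf_pos hg_pos fun s hs => by
      rw [trim_measurableSet_eq hm hs, ← hPA s hs, ← hPAc s hs, ← measureReal_def,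
        ← measureReal_inter_add_sdiff hA, sdiff_eq, measureReal_def, measureReal_def]
  refine condExp_indicator_ae_eq_div hm hA (by fun_prop) (by fun_prop) ?_ ?_
    (ae_mixture_pos hp hf_pos hg_pos) hP fun s hs => by rw [hPA s hs, integral_const_mul]
  · filter_upwards [hf_pos] with x hx using (mul_pos hp.1 hx).le
  · filter_upwards [hg_pos] with x hx
    simpa using (mul_pos (sub_pos.2 hp.2) hx).le

theorem total_probability_bias_formula_general
    {Ω : Type*} {𝒜 ℋ : MeasurableSpace Ω} (hℋ : ℋ ≤ 𝒜)
    (P₀ : @Measure Ω 𝒜) [IsProbabilityMeasure P₀]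
    (A : Set Ω) (hA : MeasurableSet[𝒜] A)
    (p₀ : ℝ) (hp₀ : p₀ = (P₀ A).toReal) (hp₀0 : 0 < p₀) (hp₀1 : p₀ < 1)
    (μ : @Measure Ω ℋ)
    (fA fAc : Ω → ℝ)
    (hfA_meas : @Measurable Ω ℝ ℋ _ fA) (hfAc_meas : @Measurable Ω ℝ ℋ _ fAc)
    (hfA_int : Integrable fA μ) (hfAc_int : Integrable fAc μ)
    (hfA_pos : ∀ᵐ ω ∂μ, 0 < fA ω) (hfAc_pos : ∀ᵐ ω ∂μ, 0 < fAc ω)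
    (hdensA : ∀ H : Set Ω, MeasurableSet[ℋ] H →
      (P₀ (H ∩ A)).toReal = p₀ * ∫ ω in H, fA ω ∂μ)
    (hdensAc : ∀ H : Set Ω, MeasurableSet[ℋ] H →
      (P₀ (H ∩ Aᶜ)).toReal = (1 - p₀) * ∫ ω in H, fAc ω ∂μ)
    (q : ℝ) (hq : q ∈ Set.Ioo (0:ℝ) 1)
    (Q : @Measure Ω ℋ) [IsProbabilityMeasure Q]
    (hQ : ∀ H : Set Ω, MeasurableSet[ℋ] H →
      (Q H).toReal = q * (∫ ω in H, fA ω ∂μ) + (1 - q) * (∫ ω in H, fAc ω ∂μ)) :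
    (∫ ω, condExp ℋ P₀ (A.indicator fun _ => (1:ℝ)) ω ∂Q) - q =
      (p₀ - q) * ∫ ω, fA ω * fAc ω / (p₀ * fA ω + (1 - p₀) * fAc ω) ∂μ := by
  have hp₀' : p₀ ∈ Ioo (0 : ℝ) 1 := ⟨hp₀0, hp₀1⟩
  have hce := condExp_indicator_ae_eq_mixture_div hℋ hA hp₀' hfA_meas hfAc_meas hfA_int
    hfAc_int hfA_pos hfAc_pos hdensA hdensAc
  have hfA_one : ∫ ω, fA ω ∂μ = 1 := by
    have h := hdensA univ MeasurableSet.univ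
    rw [univ_inter, setIntegral_univ, ← hp₀] at h
    exact (mul_eq_left₀ hp₀0.ne').1 h.symm
  rw [eq_withDensity_mixture_of_toReal_eq hq hfA_int hfAc_int hfA_pos hfAc_pos hQ,
    ← integral_congr_ae ((withDensity_absolutelyContinuous _ _).ae_eq hce),
    integral_withDensity_mixture_div_mixture hp₀' hq hfA_meas hfAc_meas hfA_int hfAc_int
      hfA_pos hfAc_pos, hfA_one]
  ring

/-- **exact bias of the total-probability estimator.** Let `Q` be the
mixture measure `Q[H] = q·∫_H f_A dμ + (1−q)·∫_H f_{A^c} dμ` for `q ∈ (0,1)`. Then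
`∫ P₀[A|ℋ] dQ − q = (p₀ − q) · ∫ f_A·f_{A^c}/(p₀·f_A + (1−p₀)·f_{A^c}) dμ`. -/
theorem total_probability_bias_formula
    {Ω : Type*} {𝒜 ℋ : MeasurableSpace Ω} (hℋ : ℋ ≤ 𝒜)
    (P₀ : @Measure Ω 𝒜) [IsProbabilityMeasure P₀]
    (A : Set Ω) (hA : MeasurableSet[𝒜] A)
    (p₀ : ℝ) (hp₀ : p₀ = (P₀ A).toReal) (hp₀0 : 0 < p₀) (hp₀1 : p₀ < 1)
    (μ : @Measure Ω ℋ) [SigmaFinite μ]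
    (fA fAc : Ω → ℝ)
    (hfA_meas : @Measurable Ω ℝ ℋ _ fA) (hfAc_meas : @Measurable Ω ℝ ℋ _ fAc)
    (hfA_int : Integrable fA μ) (hfAc_int : Integrable fAc μ)
    (hfA_pos : ∀ᵐ ω ∂μ, 0 < fA ω) (hfAc_pos : ∀ᵐ ω ∂μ, 0 < fAc ω)
    (hdensA : ∀ H : Set Ω, MeasurableSet[ℋ] H →
      (P₀ (H ∩ A)).toReal = p₀ * ∫ ω in H, fA ω ∂μ)
    (hdensAc : ∀ H : Set Ω, MeasurableSet[ℋ] H →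
      (P₀ (H ∩ Aᶜ)).toReal = (1 - p₀) * ∫ ω in H, fAc ω ∂μ)
    (q : ℝ) (hq : q ∈ Set.Ioo (0:ℝ) 1)
    (Q : @Measure Ω ℋ) [IsProbabilityMeasure Q]
    (hQ : ∀ H : Set Ω, MeasurableSet[ℋ] H →
      (Q H).toReal = q * (∫ ω in H, fA ω ∂μ) + (1 - q) * (∫ ω in H, fAc ω ∂μ)) :
    (∫ ω, condExp ℋ P₀ (A.indicator fun _ => (1:ℝ)) ω ∂Q) - q =
      (p₀ - q) * ∫ ω, fA ω * fAc ω / (p₀ * fA ω + (1 - p₀) * fAc ω) ∂μ :=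
  total_probability_bias_formula_general hℋ P₀ A hA p₀ hp₀ hp₀0 hp₀1 μ fA fAc hfA_meas hfAc_meas
    hfA_int hfAc_int hfA_pos hfAc_pos hdensA hdensAc q hq Q hQ
end
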